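/- arXiv:2405.17700 — 6 statements merged into one kernel-verified Lean document; each statement's English description precedes it below -/
import Mathlib

section
/- Fix d ≥ 1, p ∈ ℝ, and vectors u, v ∈ ℝ^d with all entries positive. Then the maps w ↦ M(u; w, p) and w ↦ log M(u; w, p) − log M(v; w, p) are quasilinear on the simplex Δ_{d−1}: for all w¹, w² ∈ Δ_{d−1} and λ ∈ [0, 1], writing f for either map, min(f(w¹), f(w²)) ≤ f(λ w¹ + (1−λ) w²) ≤ max(f(w¹), f(w²)). -/
/-- The weighted power mean `M(u; w, p)`. -/
noncomputable def pmean {d : ℕ} (u w : Fin d → ℝ) (p : ℝ) : ℝ :=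
  if p = 0 then ∏ i, u i ^ w i else (∑ i, w i * u i ^ p) ^ (1 / p)

/-- `w` belongs to the probability simplex `Δ_{d-1}`. -/
def inSimplex {d : ℕ} (w : Fin d → ℝ) : Prop :=
  (∀ i, 0 ≤ w i) ∧ ∑ i, w i = 1

private lemma between_of_convex {a b l m : ℝ} (hl : 0 ≤ l) (hm : 0 ≤ m) (hlm : l + m = 1) :
    min a b ≤ l * a + m * b ∧ l * a + m * b ≤ max a b := by
  have hm' : m = 1 - l := by linarith
  subst hm'
  rcases le_total a b with h | h
  · rw [min_eq_left h, max_eq_right h]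
    constructor <;> nlinarith [mul_nonneg hl (sub_nonneg.mpr h), mul_nonneg hm (sub_nonneg.mpr h)]
  · rw [min_eq_right h, max_eq_left h]
    constructor <;> nlinarith [mul_nonneg hl (sub_nonneg.mpr h), mul_nonneg hm (sub_nonneg.mpr h)]

private lemma mediant_between {a₁ a₂ b₁ b₂ l m : ℝ} (hb₁ : 0 < b₁) (hb₂ : 0 < b₂)
    (hl : 0 ≤ l) (hm : 0 ≤ m) (hlm : l + m = 1) :
    min (a₁ / b₁) (a₂ / b₂) ≤ (l * a₁ + m * a₂) / (l * b₁ + m * b₂) ∧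
      (l * a₁ + m * a₂) / (l * b₁ + m * b₂) ≤ max (a₁ / b₁) (a₂ / b₂) := by
  have hD : 0 < l * b₁ + m * b₂ := by
    rcases eq_or_lt_of_le hl with h0 | h0
    · have hm1 : m = 1 := by linarith
      rw [← h0, hm1]; simpa using hb₂
    · have : 0 < l * b₁ := mul_pos h0 hb₁
      nlinarith [mul_nonneg hm hb₂.le]
  rcases le_total (a₁ / b₁) (a₂ / b₂) with h | h
  · have h' := (div_le_div_iff₀ hb₁ hb₂).mp h
    rw [min_eq_left h, max_eq_right h]
    constructor
    · rw [div_le_div_iff₀ hb₁ hD]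
      nlinarith [mul_nonneg hm (sub_nonneg.mpr h')]
    · rw [div_le_div_iff₀ hD hb₂]
      nlinarith [mul_nonneg hl (sub_nonneg.mpr h')]
  · have h' := (div_le_div_iff₀ hb₂ hb₁).mp h
    rw [min_eq_right h, max_eq_left h]
    constructor
    · rw [div_le_div_iff₀ hb₂ hD]
      nlinarith [mul_nonneg hl (sub_nonneg.mpr h')]
    · rw [div_le_div_iff₀ hD hb₁]
      nlinarith [mul_nonneg hm (sub_nonneg.mpr h')]

private lemma log_between {x y z : ℝ} (hx : 0 < x) (hy : 0 < y)
    (h1 : min x y ≤ z) (h2 : z ≤ max x y) :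
    min (Real.log x) (Real.log y) ≤ Real.log z ∧
      Real.log z ≤ max (Real.log x) (Real.log y) := by
  have hz : 0 < z := lt_of_lt_of_le (lt_min hx hy) h1
  rcases le_total x y with h | h
  · rw [min_eq_left h] at h1; rw [max_eq_right h] at h2
    rw [min_eq_left ((Real.log_le_log_iff hx hy).mpr h),
      max_eq_right ((Real.log_le_log_iff hx hy).mpr h)]
    exact ⟨(Real.log_le_log_iff hx hz).mpr h1, (Real.log_le_log_iff hz hy).mpr h2⟩
  · rw [min_eq_right h] at h1; rw [max_eq_left h] at h2
    rw [min_eq_right ((Real.log_le_log_iff hy hx).mpr h),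
      max_eq_left ((Real.log_le_log_iff hy hx).mpr h)]
    exact ⟨(Real.log_le_log_iff hy hz).mpr h1, (Real.log_le_log_iff hz hx).mpr h2⟩

private lemma smul_between {c a b z : ℝ} (h1 : min a b ≤ z) (h2 : z ≤ max a b) :
    min (c * a) (c * b) ≤ c * z ∧ c * z ≤ max (c * a) (c * b) := by
  rcases le_total a b with h | h <;> rcases le_total (0 : ℝ) c with hc | hc
  · rw [min_eq_left h] at h1; rw [max_eq_right h] at h2
    exact ⟨min_le_of_left_le (by nlinarith [mul_nonneg hc (sub_nonneg.mpr h1)]),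
      le_max_of_le_right (by nlinarith [mul_nonneg hc (sub_nonneg.mpr h2)])⟩
  · rw [min_eq_left h] at h1; rw [max_eq_right h] at h2
    exact ⟨min_le_of_right_le (by nlinarith [mul_nonneg (neg_nonneg.mpr hc) (sub_nonneg.mpr h2)]),
      le_max_of_le_left (by nlinarith [mul_nonneg (neg_nonneg.mpr hc) (sub_nonneg.mpr h1)])⟩
  · rw [min_eq_right h] at h1; rw [max_eq_left h] at h2
    exact ⟨min_le_of_right_le (by nlinarith [mul_nonneg hc (sub_nonneg.mpr h1)]),
      le_max_of_le_left (by nlinarith [mul_nonneg hc (sub_nonneg.mpr h2)])⟩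
  · rw [min_eq_right h] at h1; rw [max_eq_left h] at h2
    exact ⟨min_le_of_left_le (by nlinarith [mul_nonneg (neg_nonneg.mpr hc) (sub_nonneg.mpr h2)]),
      le_max_of_le_right (by nlinarith [mul_nonneg (neg_nonneg.mpr hc) (sub_nonneg.mpr h1)])⟩

private lemma rpow_between {x y z q : ℝ} (hx : 0 < x) (hy : 0 < y)
    (h1 : min x y ≤ z) (h2 : z ≤ max x y) :
    min (x ^ q) (y ^ q) ≤ z ^ q ∧ z ^ q ≤ max (x ^ q) (y ^ q) := by
  have hz : 0 < z := lt_of_lt_of_le (lt_min hx hy) h1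
  rcases le_total (0 : ℝ) q with hq | hq
  · rcases le_total x y with h | h
    · rw [min_eq_left h] at h1; rw [max_eq_right h] at h2
      constructor
      · exact min_le_of_left_le (Real.rpow_le_rpow hx.le h1 hq)
      · exact le_max_of_le_right (Real.rpow_le_rpow hz.le h2 hq)
    · rw [min_eq_right h] at h1; rw [max_eq_left h] at h2
      constructor
      · exact min_le_of_right_le (Real.rpow_le_rpow hy.le h1 hq)
      · exact le_max_of_le_left (Real.rpow_le_rpow hz.le h2 hq)
  · rcases le_total x y with h | h
    · rw [min_eq_left h] at h1; rw [max_eq_right h] at h2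
      constructor
      · exact min_le_of_right_le (Real.rpow_le_rpow_of_nonpos hz h2 hq)
      · exact le_max_of_le_left (Real.rpow_le_rpow_of_nonpos hx h1 hq)
    · rw [min_eq_right h] at h1; rw [max_eq_left h] at h2
      constructor
      · exact min_le_of_left_le (Real.rpow_le_rpow_of_nonpos hz h2 hq)
      · exact le_max_of_le_right (Real.rpow_le_rpow_of_nonpos hy h1 hq)

private lemma sum_pos_of_simplex {d : ℕ} {u w : Fin d → ℝ} (p : ℝ)
    (hu : ∀ i, 0 < u i) (hw : inSimplex w) : 0 < ∑ i, w i * u i ^ p := by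
  obtain ⟨hw0, hw1⟩ := hw
  have hex : ∃ i ∈ Finset.univ, 0 < w i := by
    by_contra h
    push_neg at h
    have : ∑ i, w i ≤ 0 := Finset.sum_nonpos fun i _ => h i (Finset.mem_univ i)
    linarith
  obtain ⟨i, _, hi⟩ := hex
  exact Finset.sum_pos'
    (fun j _ => mul_nonneg (hw0 j) (Real.rpow_pos_of_pos (hu j) p).le)
    ⟨i, Finset.mem_univ i, mul_pos hi (Real.rpow_pos_of_pos (hu i) p)⟩

/-- For fixed `p`, both `w ↦ M(u; w, p)` and
`w ↦ log M(u; w, p) - log M(v; w, p)` are quasilinear on the simplex. -/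
theorem pmean_quasilinear_weight (d : ℕ) (hd : 1 ≤ d) (p : ℝ)
    (u v : Fin d → ℝ) (hu : ∀ i, 0 < u i) (hv : ∀ i, 0 < v i)
    (w₁ w₂ : Fin d → ℝ) (hw₁ : inSimplex w₁) (hw₂ : inSimplex w₂)
    (lam : ℝ) (hlam : lam ∈ Set.Icc (0 : ℝ) 1) :
    (min (pmean u w₁ p) (pmean u w₂ p)
        ≤ pmean u (fun i => lam * w₁ i + (1 - lam) * w₂ i) p ∧
      pmean u (fun i => lam * w₁ i + (1 - lam) * w₂ i) p
        ≤ max (pmean u w₁ p) (pmean u w₂ p)) ∧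
    (min (Real.log (pmean u w₁ p) - Real.log (pmean v w₁ p))
         (Real.log (pmean u w₂ p) - Real.log (pmean v w₂ p))
        ≤ Real.log (pmean u (fun i => lam * w₁ i + (1 - lam) * w₂ i) p)
            - Real.log (pmean v (fun i => lam * w₁ i + (1 - lam) * w₂ i) p) ∧
      Real.log (pmean u (fun i => lam * w₁ i + (1 - lam) * w₂ i) p)
          - Real.log (pmean v (fun i => lam * w₁ i + (1 - lam) * w₂ i) p)
        ≤ max (Real.log (pmean u w₁ p) - Real.log (pmean v w₁ p))
              (Real.log (pmean u w₂ p) - Real.log (pmean v w₂ p))) := by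
  obtain ⟨hl0, hl1⟩ := hlam
  have hm0 : (0:ℝ) ≤ 1 - lam := by linarith
  have hlm : lam + (1 - lam) = 1 := by ring
  set w₃ : Fin d → ℝ := fun i => lam * w₁ i + (1 - lam) * w₂ i with hw₃def
  have hw₃ : inSimplex w₃ := by
    refine ⟨fun i => add_nonneg (mul_nonneg hl0 (hw₁.1 i)) (mul_nonneg hm0 (hw₂.1 i)), ?_⟩
    simp only [w₃]
    rw [Finset.sum_add_distrib, ← Finset.mul_sum, ← Finset.mul_sum, hw₁.2, hw₂.2]
    ring
  by_cases hp : p = 0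
  · subst hp
    have hpm0 : ∀ x w : Fin d → ℝ, pmean x w 0 = ∏ i, x i ^ w i := fun x w => if_pos rfl
    simp only [hpm0]
    have hlog : ∀ (x w : Fin d → ℝ), (∀ i, 0 < x i) →
        Real.log (∏ i, x i ^ w i) = ∑ i, w i * Real.log (x i) := by
      intro x w hx
      rw [Real.log_prod (fun i _ => (Real.rpow_pos_of_pos (hx i) _).ne')]
      exact Finset.sum_congr rfl fun i _ => Real.log_rpow (hx i) _
    have hcomb : ∀ x : Fin d → ℝ,
        (∑ i, w₃ i * Real.log (x i))
          = lam * (∑ i, w₁ i * Real.log (x i)) + (1 - lam) * (∑ i, w₂ i * Real.log (x i)) := by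
      intro x
      simp only [w₃, add_mul, Finset.sum_add_distrib, Finset.mul_sum, mul_assoc]
    have hpm : ∀ (x w : Fin d → ℝ), (∀ i, 0 < x i) → 0 < ∏ i, x i ^ w i :=
      fun x w hx => Finset.prod_pos fun i _ => Real.rpow_pos_of_pos (hx i) _
    constructor
    · -- lift from log values
      have hb := between_of_convex (a := ∑ i, w₁ i * Real.log (u i))
        (b := ∑ i, w₂ i * Real.log (u i)) hl0 hm0 hlm
      rw [← hcomb u, ← hlog u w₁ hu, ← hlog u w₂ hu, ← hlog u w₃ hu] at hb
      have h1 := hpm u w₁ hu; have h2 := hpm u w₂ hu; have h3 := hpm u w₃ hu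
      rcases le_total (∏ i, u i ^ w₁ i) (∏ i, u i ^ w₂ i) with h | h
      · rw [min_eq_left ((Real.log_le_log_iff h1 h2).mpr h),
          max_eq_right ((Real.log_le_log_iff h1 h2).mpr h)] at hb
        rw [min_eq_left h, max_eq_right h]
        exact ⟨(Real.log_le_log_iff h1 h3).mp hb.1, (Real.log_le_log_iff h3 h2).mp hb.2⟩
      · rw [min_eq_right ((Real.log_le_log_iff h2 h1).mpr h),
          max_eq_left ((Real.log_le_log_iff h2 h1).mpr h)] at hb
        rw [min_eq_right h, max_eq_left h]
        exact ⟨(Real.log_le_log_iff h2 h3).mp hb.1, (Real.log_le_log_iff h3 h1).mp hb.2⟩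
    · rw [hlog u w₁ hu, hlog u w₂ hu, hlog u w₃ hu,
        hlog v w₁ hv, hlog v w₂ hv, hlog v w₃ hv]
      have hb := between_of_convex
        (a := (∑ i, w₁ i * Real.log (u i)) - ∑ i, w₁ i * Real.log (v i))
        (b := (∑ i, w₂ i * Real.log (u i)) - ∑ i, w₂ i * Real.log (v i)) hl0 hm0 hlm
      have heq : (∑ i, w₃ i * Real.log (u i)) - ∑ i, w₃ i * Real.log (v i)
          = lam * ((∑ i, w₁ i * Real.log (u i)) - ∑ i, w₁ i * Real.log (v i))
            + (1 - lam) * ((∑ i, w₂ i * Real.log (u i)) - ∑ i, w₂ i * Real.log (v i)) := by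
        rw [hcomb u, hcomb v]; ring
      rw [← heq] at hb
      exact hb
  · have hpmn : ∀ x w : Fin d → ℝ, pmean x w p = (∑ i, w i * x i ^ p) ^ (1/p) :=
      fun x w => if_neg hp
    simp only [hpmn]
    have hSu₁ := sum_pos_of_simplex p hu hw₁
    have hSu₂ := sum_pos_of_simplex p hu hw₂
    have hSu₃ := sum_pos_of_simplex p hu hw₃
    have hSv₁ := sum_pos_of_simplex p hv hw₁
    have hSv₂ := sum_pos_of_simplex p hv hw₂
    have hSv₃ := sum_pos_of_simplex p hv hw₃
    have hcomb : ∀ x : Fin d → ℝ,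
        (∑ i, w₃ i * x i ^ p)
          = lam * (∑ i, w₁ i * x i ^ p) + (1 - lam) * (∑ i, w₂ i * x i ^ p) := by
      intro x
      simp only [w₃, add_mul, Finset.sum_add_distrib, Finset.mul_sum, mul_assoc]
    constructor
    · have hb := between_of_convex (a := ∑ i, w₁ i * u i ^ p)
        (b := ∑ i, w₂ i * u i ^ p) hl0 hm0 hlm
      rw [← hcomb u] at hb
      exact rpow_between hSu₁ hSu₂ hb.1 hb.2
    · -- ratio argument
      have hmed := mediant_between (a₁ := ∑ i, w₁ i * u i ^ p) (a₂ := ∑ i, w₂ i * u i ^ p)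
        hSv₁ hSv₂ hl0 hm0 hlm
      rw [← hcomb u, ← hcomb v] at hmed
      have hR₁ : 0 < (∑ i, w₁ i * u i ^ p) / (∑ i, w₁ i * v i ^ p) := div_pos hSu₁ hSv₁
      have hR₂ : 0 < (∑ i, w₂ i * u i ^ p) / (∑ i, w₂ i * v i ^ p) := div_pos hSu₂ hSv₂
      have hlb := log_between hR₁ hR₂ hmed.1 hmed.2
      have hsb := smul_between (c := 1 / p) hlb.1 hlb.2
      have hkey : ∀ (w : Fin d → ℝ), 0 < (∑ i, w i * u i ^ p) → 0 < (∑ i, w i * v i ^ p) →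
          Real.log ((∑ i, w i * u i ^ p) ^ (1/p)) - Real.log ((∑ i, w i * v i ^ p) ^ (1/p))
            = 1 / p * Real.log ((∑ i, w i * u i ^ p) / (∑ i, w i * v i ^ p)) := by
        intro w h1 h2
        rw [Real.log_rpow h1, Real.log_rpow h2, Real.log_div h1.ne' h2.ne']
        ring
      rw [hkey w₁ hSu₁ hSv₁, hkey w₂ hSu₂ hSv₂, hkey w₃ hSu₃ hSv₃]
      exact hsb
end

section
/- Fix d ≥ 2, 0 < u_min < u_max, and a weight vector w ∈ Δ_{d−1} with at least two strictly positive coordinates. Then the class H = {u ↦ M(u; w, p) : p ∈ ℝ} of real-valued functions on [u_min, u_max]^d has pseudo-dimension exactly 1: (i) there exists a single point u ∈ [u_min, u_max]^d that is pseudo-shattered by H, and (ii) no two points u¹, u² ∈ [u_min, u_max]^d are pseudo-shattered by H, i.e., for all u¹, u² ∈ [u_min, u_max]^d and all thresholds r₁, r₂ ∈ ℝ there exists a sign pattern b ∈ {−1, +1}² such that no p ∈ ℝ satisfies sign(M(u^j; w, p) − r_j) = b_j for j = 1, 2. -/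
noncomputable def sgn (t : ℝ) : ℝ := if 0 ≤ t then 1 else -1

section aux

variable {d : ℕ} {u w : Fin d → ℝ}

lemma pm_sum_pos (hu : ∀ i, 0 < u i) (hw0 : ∀ i, 0 ≤ w i) (hex : ∃ i, 0 < w i) (p : ℝ) :
    0 < ∑ i, w i * u i ^ p := by
  obtain ⟨i, hi⟩ := hex
  refine Finset.sum_pos' (fun j _ => mul_nonneg (hw0 j) (Real.rpow_pos_of_pos (hu j) p).le) ?_
  exact ⟨i, Finset.mem_univ i, mul_pos hi (Real.rpow_pos_of_pos (hu i) p)⟩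

lemma pmean_pos (hu : ∀ i, 0 < u i) (hw0 : ∀ i, 0 ≤ w i) (hex : ∃ i, 0 < w i) (p : ℝ) :
    0 < pmean u w p := by
  unfold pmean
  split
  · exact Finset.prod_pos fun i _ => Real.rpow_pos_of_pos (hu i) _
  · exact Real.rpow_pos_of_pos (pm_sum_pos hu hw0 hex p) _

lemma pmean_of_ne {p : ℝ} (hp : p ≠ 0) : pmean u w p = (∑ i, w i * u i ^ p) ^ (1 / p) :=
  if_neg hp

lemma pmean_mono_pos (hu : ∀ i, 0 < u i) (hw0 : ∀ i, 0 ≤ w i) (hsum : ∑ i, w i = 1)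
    (hex : ∃ i, 0 < w i) {p q : ℝ} (hp : 0 < p) (hpq : p ≤ q) :
    pmean u w p ≤ pmean u w q := by
  have hq : 0 < q := lt_of_lt_of_le hp hpq
  rw [pmean_of_ne hp.ne', pmean_of_ne hq.ne']
  have h1 : ∑ i, w i * u i ^ p ≤ (∑ i, w i * u i ^ q) ^ (p / q) := by
    have key := Real.arith_mean_le_rpow_mean Finset.univ w (fun i => u i ^ p)
      (fun i _ => hw0 i) hsum (fun i _ => (Real.rpow_pos_of_pos (hu i) p).le)
      (p := q / p) ((le_div_iff₀ hp).mpr (by linarith))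
    have hz : ∀ i, (u i ^ p) ^ (q / p) = u i ^ q := by
      intro i
      rw [← Real.rpow_mul (hu i).le]
      congr 1
      field_simp
    simp only [hz] at key
    have : 1 / (q / p) = p / q := by field_simp
    rwa [this] at key
  calc (∑ i, w i * u i ^ p) ^ (1 / p)
      ≤ ((∑ i, w i * u i ^ q) ^ (p / q)) ^ (1 / p) :=
        Real.rpow_le_rpow (pm_sum_pos hu hw0 hex p).le h1 (by positivity)
    _ = (∑ i, w i * u i ^ q) ^ (1 / q) := by
        rw [← Real.rpow_mul (pm_sum_pos hu hw0 hex q).le]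
        congr 1
        field_simp

lemma geo_le_pmean (hu : ∀ i, 0 < u i) (hw0 : ∀ i, 0 ≤ w i) (hsum : ∑ i, w i = 1)
    (hex : ∃ i, 0 < w i) {q : ℝ} (hq : 0 < q) :
    pmean u w 0 ≤ pmean u w q := by
  rw [pmean_of_ne hq.ne']
  have hG : 0 < ∏ i, u i ^ w i := Finset.prod_pos fun i _ => Real.rpow_pos_of_pos (hu i) _
  have key := Real.geom_mean_le_arith_mean_weighted Finset.univ w (fun i => u i ^ q)
    (fun i _ => hw0 i) hsum (fun i _ => (Real.rpow_pos_of_pos (hu i) q).le)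
  have hprod : ∏ i, (u i ^ q) ^ w i = (∏ i, u i ^ w i) ^ q := by
    rw [← Real.finset_prod_rpow Finset.univ _ (fun i _ => (Real.rpow_pos_of_pos (hu i) _).le) q]
    refine Finset.prod_congr rfl fun i _ => ?_
    rw [← Real.rpow_mul (hu i).le, ← Real.rpow_mul (hu i).le, mul_comm]
  rw [hprod] at key
  have : pmean u w 0 = ((∏ i, u i ^ w i) ^ q) ^ (1 / q) := by
    rw [← Real.rpow_mul hG.le, mul_one_div_cancel hq.ne', Real.rpow_one]
    simp [pmean]
  rw [this]
  exact Real.rpow_le_rpow (by positivity) key (by positivity)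

lemma pmean_inv_eq (hu : ∀ i, 0 < u i) (hw0 : ∀ i, 0 ≤ w i) (hex : ∃ i, 0 < w i) (p : ℝ) :
    pmean u w p = (pmean (fun i => (u i)⁻¹) w (-p))⁻¹ := by
  have huinv : ∀ i, (u i)⁻¹ ^ (-p) = u i ^ p := fun i => by
    rw [Real.inv_rpow (hu i).le, ← Real.rpow_neg (hu i).le, neg_neg]
  unfold pmean
  by_cases hp : p = 0
  · subst hp
    rw [neg_zero, if_pos rfl, if_pos rfl, ← Finset.prod_inv_distrib]
    refine Finset.prod_congr rfl fun i _ => ?_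
    rw [Real.inv_rpow (hu i).le, inv_inv]
  · rw [if_neg hp, if_neg (neg_ne_zero.mpr hp)]
    simp only [huinv]
    have hS : (0:ℝ) ≤ ∑ i, w i * u i ^ p := (pm_sum_pos hu hw0 hex p).le
    rw [← Real.rpow_neg hS]
    congr 1
    ring

lemma pmean_mono (hu : ∀ i, 0 < u i) (hw0 : ∀ i, 0 ≤ w i) (hsum : ∑ i, w i = 1)
    (hex : ∃ i, 0 < w i) {p q : ℝ} (hpq : p ≤ q) :
    pmean u w p ≤ pmean u w q := by
  have huinv : ∀ i, 0 < (u i)⁻¹ := fun i => inv_pos.mpr (hu i)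
  have key0 : ∀ {s : ℝ}, 0 ≤ s → pmean u w (-s) ≤ pmean u w 0 := by
    intro s hs
    rcases eq_or_lt_of_le hs with h | h
    · rw [← h, neg_zero]
    · have h1 : pmean (fun i => (u i)⁻¹) w 0 ≤ pmean (fun i => (u i)⁻¹) w s :=
        geo_le_pmean huinv hw0 hsum hex h
      have e0 : pmean u w 0 = (pmean (fun i => (u i)⁻¹) w 0)⁻¹ := by
        simpa using pmean_inv_eq hu hw0 hex 0
      rw [pmean_inv_eq hu hw0 hex (-s), neg_neg, e0]
      exact inv_anti₀ (pmean_pos huinv hw0 hex 0) h1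
  have keyneg : ∀ {s t : ℝ}, 0 < s → s ≤ t → pmean u w (-t) ≤ pmean u w (-s) := by
    intro s t hs hst
    rw [pmean_inv_eq hu hw0 hex (-t), pmean_inv_eq hu hw0 hex (-s), neg_neg, neg_neg]
    exact inv_anti₀ (pmean_pos huinv hw0 hex s)
      (pmean_mono_pos huinv hw0 hsum hex hs hst)
  rcases lt_trichotomy p 0 with hp | hp | hp
  · rcases lt_trichotomy q 0 with hq | hq | hq
    · have := keyneg (neg_pos.mpr hq) (by linarith : -q ≤ -p)
      simpa using this
    · subst hq
      have := key0 (le_of_lt (neg_pos.mpr hp) : (0:ℝ) ≤ -p)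
      simpa using this
    · have h1 : pmean u w p ≤ pmean u w 0 := by
        have := key0 (le_of_lt (neg_pos.mpr hp) : (0:ℝ) ≤ -p)
        simpa using this
      exact h1.trans (geo_le_pmean hu hw0 hsum hex hq)
  · subst hp
    rcases eq_or_lt_of_le hpq with h | h
    · rw [← h]
    · exact geo_le_pmean hu hw0 hsum hex h
  · exact pmean_mono_pos hu hw0 hsum hex hp hpq

lemma sgn_eq_one_iff {t : ℝ} : sgn t = 1 ↔ 0 ≤ t := by
  unfold sgn
  split
  · next h => exact iff_of_true rfl h
  · next h => exact iff_of_false (by norm_num) h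

lemma sgn_eq_neg_one_iff {t : ℝ} : sgn t = -1 ↔ t < 0 := by
  unfold sgn
  split
  · next h => exact iff_of_false (by norm_num) (not_lt.mpr h)
  · next h => exact iff_of_true rfl (lt_of_not_ge h)

lemma rpow_one_div_big {a c q : ℝ} (ha0 : 0 < a) (hc0 : 0 < c) (hc1 : c < 1)
    (hq0 : 0 < q) (hq : Real.log a / Real.log c < q) : c < a ^ (1 / q) := by
  rw [Real.rpow_def_of_pos ha0, ← Real.exp_log hc0]
  apply Real.exp_lt_exp.mpr
  have hlc : Real.log c < 0 := Real.log_neg hc0 hc1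
  have h1 : q * Real.log c < Real.log a := (div_lt_iff_of_neg hlc).mp hq
  rw [mul_one_div, lt_div_iff₀ hq0]
  nlinarith

end aux

/-- For a fixed weight vector with at least two strictly positive coordinates,
the class `{u ↦ M(u; w, p) : p ∈ ℝ}` on `[u_min, u_max]^d` has pseudo-dimension
exactly 1: some single point is pseudo-shattered, and no two points are. -/
theorem pdim_known_weights (d : ℕ) (hd : 2 ≤ d) (umin umax : ℝ)
    (hmin : 0 < umin) (hlt : umin < umax)
    (w : Fin d → ℝ) (hw : inSimplex w)
    (htwo : ∃ i j : Fin d, i ≠ j ∧ 0 < w i ∧ 0 < w j) :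
    (∃ u : Fin d → ℝ, (∀ i, u i ∈ Set.Icc umin umax) ∧
      ∃ r : ℝ, ∀ b : ℝ, b = 1 ∨ b = -1 →
        ∃ p : ℝ, sgn (pmean u w p - r) = b) ∧
    (∀ u₁ u₂ : Fin d → ℝ, (∀ i, u₁ i ∈ Set.Icc umin umax) →
      (∀ i, u₂ i ∈ Set.Icc umin umax) → ∀ r₁ r₂ : ℝ,
      ∃ b₁ b₂ : ℝ, (b₁ = 1 ∨ b₁ = -1) ∧ (b₂ = 1 ∨ b₂ = -1) ∧
        ¬ ∃ p : ℝ, sgn (pmean u₁ w p - r₁) = b₁ ∧ sgn (pmean u₂ w p - r₂) = b₂) := by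
  obtain ⟨i, j, hij, hwi, hwj⟩ := htwo
  obtain ⟨hw0, hsum⟩ := hw
  have hex : ∃ k, 0 < w k := ⟨i, hwi⟩
  have humax : (0:ℝ) < umax := hmin.trans hlt
  constructor
  · -- one point is shattered
    set u : Fin d → ℝ := fun k => if k = j then umax else umin with hu_def
    have hu : ∀ k, 0 < u k := fun k => by
      simp only [hu_def]; split <;> [exact humax; exact hmin]
    have huIcc : ∀ k, u k ∈ Set.Icc umin umax := fun k => by
      simp only [hu_def]; split
      · exact ⟨hlt.le, le_refl _⟩
      · exact ⟨le_refl _, hlt.le⟩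
    set r : ℝ := (umin + umax) / 2 with hr_def
    have hr1 : umin < r := by rw [hr_def]; linarith
    have hr2 : r < umax := by rw [hr_def]; linarith
    have hr0 : 0 < r := hmin.trans hr1
    -- weights are < 1
    have hpair : w i + w j ≤ 1 := by
      have := Finset.sum_le_sum_of_subset_of_nonneg (Finset.subset_univ {i, j})
        (fun k _ _ => hw0 k)
      rw [Finset.sum_pair hij] at this
      rwa [hsum] at this
    have hwi1 : w i < 1 := by linarith
    have hwj1 : w j < 1 := by linarith
    set c1 : ℝ := r / umax with hc1_def
    set c2 : ℝ := umin / r with hc2_def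
    have hc10 : 0 < c1 := div_pos hr0 humax
    have hc11 : c1 < 1 := (div_lt_one humax).mpr hr2
    have hc20 : 0 < c2 := div_pos hmin hr0
    have hc21 : c2 < 1 := (div_lt_one hr0).mpr hr1
    set A : ℝ := Real.log (w j) / Real.log c1 with hA_def
    set B : ℝ := Real.log (w i) / Real.log c2 with hB_def
    set q : ℝ := max (max A B) 0 + 1 with hq_def
    have hq0 : 0 < q := by
      have : (0:ℝ) ≤ max (max A B) 0 := le_max_right _ _
      rw [hq_def]; linarith
    have hAq : A < q := by
      have : A ≤ max (max A B) 0 := le_trans (le_max_left _ _) (le_max_left _ _)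
      rw [hq_def]; linarith
    have hBq : B < q := by
      have : B ≤ max (max A B) 0 := le_trans (le_max_right _ _) (le_max_left _ _)
      rw [hq_def]; linarith
    have hb1 : c1 < w j ^ (1 / q) := rpow_one_div_big hwj hc10 hc11 hq0 hAq
    have hb2 : c2 < w i ^ (1 / q) := rpow_one_div_big hwi hc20 hc21 hq0 hBq
    -- upper branch : pmean at q is > r
    have big : r < pmean u w q := by
      rw [pmean_of_ne hq0.ne']
      have hterm : w j * umax ^ q ≤ ∑ k, w k * u k ^ q := by
        have := Finset.single_le_sum (f := fun k => w k * u k ^ q)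
          (fun k _ => mul_nonneg (hw0 k) (Real.rpow_pos_of_pos (hu k) q).le)
          (Finset.mem_univ j)
        simpa [hu_def] using this
      have heq : (w j * umax ^ q) ^ (1 / q) = w j ^ (1 / q) * umax := by
        rw [Real.mul_rpow hwj.le (Real.rpow_pos_of_pos humax q).le,
          ← Real.rpow_mul humax.le, mul_one_div_cancel hq0.ne', Real.rpow_one]
      have h2 : (w j * umax ^ q) ^ (1 / q) ≤ (∑ k, w k * u k ^ q) ^ (1 / q) :=
        Real.rpow_le_rpow (by positivity) hterm (by positivity)
      rw [heq] at h2
      have h3 : r < w j ^ (1 / q) * umax := by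
        have := mul_lt_mul_of_pos_right hb1 humax
        rwa [hc1_def, div_mul_cancel₀ _ humax.ne'] at this
      linarith
    -- lower branch : pmean at -q is < r
    have small : pmean u w (-q) < r := by
      have hnq : (-q : ℝ) ≠ 0 := neg_ne_zero.mpr hq0.ne'
      rw [pmean_of_ne hnq]
      have hterm : w i * umin ^ (-q) ≤ ∑ k, w k * u k ^ (-q) := by
        have := Finset.single_le_sum (f := fun k => w k * u k ^ (-q))
          (fun k _ => mul_nonneg (hw0 k) (Real.rpow_pos_of_pos (hu k) (-q)).le)
          (Finset.mem_univ i)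
        simpa [hu_def, if_neg hij] using this
      have hpos : 0 < w i * umin ^ (-q) :=
        mul_pos hwi (Real.rpow_pos_of_pos hmin _)
      have h2 : (∑ k, w k * u k ^ (-q)) ^ (1 / (-q)) ≤ (w i * umin ^ (-q)) ^ (1 / (-q)) :=
        Real.rpow_le_rpow_of_nonpos hpos hterm
          (div_neg_of_pos_of_neg one_pos (neg_lt_zero.mpr hq0)).le
      have heq : (w i * umin ^ (-q)) ^ (1 / (-q)) = (w i ^ (1 / q))⁻¹ * umin := by
        rw [Real.mul_rpow hwi.le (Real.rpow_pos_of_pos hmin _).le,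
          ← Real.rpow_mul hmin.le, mul_one_div_cancel hnq, Real.rpow_one]
        congr 1
        rw [div_neg, Real.rpow_neg hwi.le]
      have h3 : (w i ^ (1 / q))⁻¹ * umin < r := by
        have hx : 0 < w i ^ (1 / q) := Real.rpow_pos_of_pos hwi _
        have hinv : (w i ^ (1 / q))⁻¹ < c2⁻¹ := by
          exact inv_strictAnti₀ hc20 hb2
        have : c2⁻¹ = r / umin := by rw [hc2_def, inv_div]
        rw [this] at hinv
        have := mul_lt_mul_of_pos_right hinv hmin
        rwa [div_mul_cancel₀ _ hmin.ne'] at this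
      rw [heq] at h2
      linarith
    refine ⟨u, huIcc, r, fun b hb => ?_⟩
    rcases hb with rfl | rfl
    · exact ⟨q, sgn_eq_one_iff.mpr (by linarith)⟩
    · exact ⟨-q, sgn_eq_neg_one_iff.mpr (by linarith)⟩
  · -- no two points are shattered
    intro u₁ u₂ h1 h2 r₁ r₂
    have hu1 : ∀ k, 0 < u₁ k := fun k => lt_of_lt_of_le hmin (h1 k).1
    have hu2 : ∀ k, 0 < u₂ k := fun k => lt_of_lt_of_le hmin (h2 k).1
    by_cases hcase : ∃ p, sgn (pmean u₁ w p - r₁) = 1 ∧ sgn (pmean u₂ w p - r₂) = -1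
    · refine ⟨-1, 1, Or.inr rfl, Or.inl rfl, ?_⟩
      rintro ⟨p, hp1, hp2⟩
      obtain ⟨p0, hq1, hq2⟩ := hcase
      have a1 : pmean u₁ w p - r₁ < 0 := sgn_eq_neg_one_iff.mp hp1
      have a2 : 0 ≤ pmean u₂ w p - r₂ := sgn_eq_one_iff.mp hp2
      have b1 : 0 ≤ pmean u₁ w p0 - r₁ := sgn_eq_one_iff.mp hq1
      have b2 : pmean u₂ w p0 - r₂ < 0 := sgn_eq_neg_one_iff.mp hq2
      have hpp0 : ¬ p0 ≤ p := fun h =>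
        absurd (pmean_mono hu1 hw0 hsum hex h) (by linarith)
      have hp0p : ¬ p ≤ p0 := fun h =>
        absurd (pmean_mono hu2 hw0 hsum hex h) (by linarith)
      exact hpp0 (le_of_not_ge hp0p)
    · exact ⟨1, -1, Or.inl rfl, Or.inr rfl, hcase⟩
end

section
/- For every d ≥ 2 there exist d − 1 pairs (u^1, v^1), …, (u^{d−1}, v^{d−1}) of vectors in ℝ^d with strictly positive entries that are shattered by the comparison class C_d = {(u, v) ↦ C((u, v); w, p) : w ∈ Δ_{d−1}, p ∈ ℝ}: for every sign pattern b ∈ {−1, +1}^{d−1} there exist w ∈ Δ_{d−1} and p ∈ ℝ such that C((u^j, v^j); w, p) = b_j for all j = 1, …, d−1. In particular (taking p = 1, where C((u, v); w, 1) = sign(Σ_{i=1}^d w_i (u_i − v_i))), the VC dimension of this comparison class is at least d − 1. -/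
/-- The comparison function `C((u,v); w, p) = sign(log M(u;w,p) - log M(v;w,p))`. -/
noncomputable def pcmp {d : ℕ} (u v w : Fin d → ℝ) (p : ℝ) : ℝ :=
  sgn (Real.log (pmean u w p) - Real.log (pmean v w p))

lemma pmean_one {d : ℕ} (u w : Fin d → ℝ) : pmean u w 1 = ∑ i, w i * u i := by
  simp [pmean, Real.rpow_one]

/-- There exist `d - 1` pairs of positive vectors shattered by the comparison
class `{(u,v) ↦ C((u,v); w, p) : w ∈ Δ_{d-1}, p ∈ ℝ}`; hence its VC dimension
is at least `d - 1`. -/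
theorem vc_comparison_lower_bound (d : ℕ) (hd : 2 ≤ d) :
    ∃ u v : Fin (d - 1) → Fin d → ℝ,
      (∀ j i, 0 < u j i) ∧ (∀ j i, 0 < v j i) ∧
      ∀ b : Fin (d - 1) → ℝ, (∀ j, b j = 1 ∨ b j = -1) →
        ∃ (w : Fin d → ℝ) (p : ℝ), inSimplex w ∧
          ∀ j, pcmp (u j) (v j) w p = b j := by
  refine ⟨fun j i => if (i : ℕ) = (j : ℕ) + 1 then 2 else 1,
          fun j i => if (i : ℕ) = 0 then 2 else 1, ?_, ?_, ?_⟩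
  · intro j i; dsimp only; split <;> norm_num
  · intro j i; dsimp only; split <;> norm_num
  intro b hb
  set c : Fin d → ℝ := fun i =>
    if h : (i : ℕ) = 0 then 3/2
    else (if b ⟨(i : ℕ) - 1, by have := i.isLt; omega⟩ = 1 then 2 else 1) with hc
  have hc1 : ∀ i, (1 : ℝ) ≤ c i := by
    intro i
    simp only [hc]
    split
    · norm_num
    · split <;> norm_num
  have hd0 : 0 < d := by omega
  have hcs : 0 < ∑ i, c i := by
    refine Finset.sum_pos (fun i _ => lt_of_lt_of_le one_pos (hc1 i)) ?_
    exact ⟨⟨0, hd0⟩, Finset.mem_univ _⟩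
  set ε : ℝ := 1 / ∑ i, c i with hε
  have hεpos : 0 < ε := by positivity
  have hwsum : ∑ i, ε * c i = 1 := by
    rw [← Finset.mul_sum, hε]
    field_simp
  refine ⟨fun i => ε * c i, 1, ⟨fun i => le_of_lt (mul_pos hεpos (lt_of_lt_of_le one_pos (hc1 i))), hwsum⟩, ?_⟩
  intro j
  have hj : (j : ℕ) + 1 < d := by have := j.isLt; omega
  set a : Fin d := ⟨(j : ℕ) + 1, hj⟩ with ha
  set z : Fin d := ⟨0, hd0⟩ with hz
  -- compute the two sums
  have hA : ∑ i, (ε * c i) * (if (i : ℕ) = (j : ℕ) + 1 then (2 : ℝ) else 1)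
      = 1 + ε * c a := by
    have : ∀ i ∈ Finset.univ, (ε * c i) * (if (i : ℕ) = (j : ℕ) + 1 then (2 : ℝ) else 1)
        = ε * c i + (if i = a then ε * c i else 0) := by
      intro i _
      by_cases h : i = a
      · subst h; simp [ha]; ring
      · have h' : (i : ℕ) ≠ (j : ℕ) + 1 := fun hh => h (Fin.ext hh)
        simp [h, h']
    rw [Finset.sum_congr rfl this, Finset.sum_add_distrib, hwsum,
      Finset.sum_ite_eq' Finset.univ a (fun i => ε * c i)]
    simp
  have hB : ∑ i, (ε * c i) * (if (i : ℕ) = 0 then (2 : ℝ) else 1)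
      = 1 + ε * c z := by
    have : ∀ i ∈ Finset.univ, (ε * c i) * (if (i : ℕ) = 0 then (2 : ℝ) else 1)
        = ε * c i + (if i = z then ε * c i else 0) := by
      intro i _
      by_cases h : i = z
      · subst h; simp [hz]; ring
      · have h' : (i : ℕ) ≠ 0 := fun hh => h (Fin.ext hh)
        simp [h, h']
    rw [Finset.sum_congr rfl this, Finset.sum_add_distrib, hwsum,
      Finset.sum_ite_eq' Finset.univ z (fun i => ε * c i)]
    simp
  have hAc : c a = if b j = 1 then 2 else 1 := by
    have h1 : (a : ℕ) ≠ 0 := by simp [ha]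
    simp only [hc]
    rw [dif_neg h1]
    have : (⟨(a : ℕ) - 1, by simp [ha]; try omega⟩ : Fin (d - 1)) = j :=
      Fin.ext (by simp [ha])
    simp [this]
  have hzc : c z = 3/2 := by simp [hc, hz]
  have hApos : (0 : ℝ) < 1 + ε * c a := by
    have := hc1 a; nlinarith
  have hBpos : (0 : ℝ) < 1 + ε * c z := by
    have := hc1 z; nlinarith
  rw [pcmp, pmean_one, pmean_one, hA, hB]
  rcases hb j with hbj | hbj
  · -- b j = 1 : c a = 2 ≥ 3/2 = c z, so A ≥ B, log diff ≥ 0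
    have hle : 1 + ε * c z ≤ 1 + ε * c a := by
      rw [hAc, if_pos hbj, hzc]; nlinarith
    have : Real.log (1 + ε * c z) ≤ Real.log (1 + ε * c a) :=
      Real.log_le_log hBpos hle
    rw [sgn, if_pos (by linarith), hbj]
  · -- b j = -1 : c a = 1 < 3/2 = c z, so A < B, log diff < 0
    have hbj1 : b j ≠ 1 := by rw [hbj]; norm_num
    have hlt : 1 + ε * c a < 1 + ε * c z := by
      rw [hAc, if_neg hbj1, hzc]; nlinarith
    have : Real.log (1 + ε * c a) < Real.log (1 + ε * c z) :=
      Real.log_lt_log hApos hlt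
    rw [sgn, if_neg (by linarith), hbj]
end

section
/- There exists a universal constant c > 0 such that for every d ≥ 1, every 0 < u_min ≤ u_max, every fixed weight vector w ∈ Δ_{d−1}, every n ≥ 1, and every sample u_1, …, u_n ∈ [u_min, u_max]^d, the empirical Rademacher complexity of the weighted power mean class satisfies (1/n) · 2^{−n} Σ_{ε ∈ {−1,+1}^n} sup_{p ∈ ℝ} Σ_{i=1}^n ε_i M(u_i; w, p) ≤ u_max (√((2 log 2 + 2 log n)/n) + c/√n). (The supremum is finite because M(u_i; w, p) ∈ [u_min, u_max] for all p.) -/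
/-- A Rademacher sign: `+1` for `true`, `-1` for `false`. -/
def radSign (b : Bool) : ℝ := if b then 1 else -1

section Aux

variable {d : ℕ} {u w : Fin d → ℝ} {umin umax : ℝ}

lemma le_wsum (hw : inSimplex w) {c : ℝ} {z : Fin d → ℝ} (h : ∀ i, c ≤ z i) :
    c ≤ ∑ i, w i * z i := by
  calc c = ∑ i, w i * c := by rw [← Finset.sum_mul, hw.2, one_mul]
  _ ≤ ∑ i, w i * z i :=
      Finset.sum_le_sum fun i _ => mul_le_mul_of_nonneg_left (h i) (hw.1 i)

lemma wsum_le (hw : inSimplex w) {c : ℝ} {z : Fin d → ℝ} (h : ∀ i, z i ≤ c) :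
    ∑ i, w i * z i ≤ c := by
  calc ∑ i, w i * z i ≤ ∑ i, w i * c :=
      Finset.sum_le_sum fun i _ => mul_le_mul_of_nonneg_left (h i) (hw.1 i)
  _ = c := by rw [← Finset.sum_mul, hw.2, one_mul]

/-- The power mean lies between the min and max of the entries. -/
lemma pmean_mem_Icc (h0 : 0 < umin) (h1 : umin ≤ umax) (hw : inSimplex w)
    (hu : ∀ j, u j ∈ Set.Icc umin umax) (p : ℝ) :
    pmean u w p ∈ Set.Icc umin umax := by
  have hupos : ∀ j, 0 < u j := fun j => lt_of_lt_of_le h0 (hu j).1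
  unfold pmean
  rcases lt_trichotomy p 0 with hp | hp | hp
  · rw [if_neg hp.ne]
    have hlb : ∀ i, umax ^ p ≤ u i ^ p := fun i =>
      Real.rpow_le_rpow_of_nonpos (hupos i) (hu i).2 hp.le
    have hub : ∀ i, u i ^ p ≤ umin ^ p := fun i =>
      Real.rpow_le_rpow_of_nonpos h0 (hu i).1 hp.le
    have hS1 : umax ^ p ≤ ∑ i, w i * u i ^ p := le_wsum hw hlb
    have hS2 : ∑ i, w i * u i ^ p ≤ umin ^ p := wsum_le hw hub
    have hSpos : 0 < ∑ i, w i * u i ^ p :=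
      lt_of_lt_of_le (Real.rpow_pos_of_pos (h0.trans_le h1) p) hS1
    have h1p : (1 : ℝ) / p ≤ 0 := by
      rw [one_div]
      exact (inv_nonpos).2 hp.le
    constructor
    · have := Real.rpow_le_rpow_of_nonpos hSpos hS2 h1p
      rw [one_div]; rwa [one_div, Real.rpow_rpow_inv h0.le hp.ne] at this
    · have := Real.rpow_le_rpow_of_nonpos (Real.rpow_pos_of_pos (h0.trans_le h1) p) hS1 h1p
      rw [one_div]; rwa [one_div, Real.rpow_rpow_inv (h0.trans_le h1).le hp.ne] at this
  · rw [if_pos hp]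
    constructor
    · calc umin = umin ^ (∑ i, w i) := by rw [hw.2, Real.rpow_one]
      _ = ∏ i, umin ^ w i := Real.rpow_sum_of_pos h0 _ _
      _ ≤ ∏ i, u i ^ w i :=
          Finset.prod_le_prod (fun i _ => (Real.rpow_pos_of_pos h0 _).le)
            (fun i _ => Real.rpow_le_rpow h0.le (hu i).1 (hw.1 i))
    · calc ∏ i, u i ^ w i ≤ ∏ i, umax ^ w i :=
          Finset.prod_le_prod (fun i _ => (Real.rpow_pos_of_pos (hupos i) _).le)
            (fun i _ => Real.rpow_le_rpow (hupos i).le (hu i).2 (hw.1 i))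
      _ = umax ^ (∑ i, w i) := (Real.rpow_sum_of_pos (h0.trans_le h1) _ _).symm
      _ = umax := by rw [hw.2, Real.rpow_one]
  · rw [if_neg hp.ne']
    have hlb : ∀ i, umin ^ p ≤ u i ^ p := fun i =>
      Real.rpow_le_rpow h0.le (hu i).1 hp.le
    have hub : ∀ i, u i ^ p ≤ umax ^ p := fun i =>
      Real.rpow_le_rpow (hupos i).le (hu i).2 hp.le
    have hS1 : umin ^ p ≤ ∑ i, w i * u i ^ p := le_wsum hw hlb
    have hS2 : ∑ i, w i * u i ^ p ≤ umax ^ p := wsum_le hw hub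
    have h1p : (0:ℝ) ≤ 1 / p := by positivity
    constructor
    · have := Real.rpow_le_rpow (Real.rpow_pos_of_pos h0 p).le hS1 h1p
      rw [one_div]; rwa [one_div, Real.rpow_rpow_inv h0.le hp.ne'] at this
    · have := Real.rpow_le_rpow (Finset.sum_nonneg fun i _ =>
        mul_nonneg (hw.1 i) (Real.rpow_nonneg (hupos i).le p)) hS2 h1p
      rw [one_div]; rwa [one_div, Real.rpow_rpow_inv (h0.trans_le h1).le hp.ne'] at this

end Aux

section Mono

variable {d : ℕ} {u w : Fin d → ℝ} {umin umax : ℝ}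

lemma prod_rpow_eq (hupos : ∀ j, 0 < u j) (q : ℝ) :
    ∏ i, (u i ^ q) ^ w i = (∏ i, u i ^ w i) ^ q := by
  rw [← Real.finset_prod_rpow _ _ (fun i _ => (Real.rpow_pos_of_pos (hupos i) _).le) q]
  exact Finset.prod_congr rfl fun i _ => by
    rw [← Real.rpow_mul (hupos i).le, ← Real.rpow_mul (hupos i).le, mul_comm]

lemma pmean_mono_pos_s16 (hw : inSimplex w) (hupos : ∀ j, 0 < u j) {p q : ℝ}
    (hp : 0 < p) (hpq : p ≤ q) : pmean u w p ≤ pmean u w q := by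
  have hq : 0 < q := hp.trans_le hpq
  have hp0 : p ≠ 0 := hp.ne'
  have hq0 : q ≠ 0 := hq.ne'
  unfold pmean
  rw [if_neg hp0, if_neg hq0]
  have hz : ∀ i ∈ Finset.univ, (0:ℝ) ≤ u i ^ p := fun i _ =>
    (Real.rpow_pos_of_pos (hupos i) p).le
  have hs : 1 ≤ q / p := (one_le_div hp).2 hpq
  have key := Real.rpow_arith_mean_le_arith_mean_rpow Finset.univ w (fun i => u i ^ p)
    (fun i _ => hw.1 i) hw.2 hz hs
  have hup : ∀ i : Fin d, (u i ^ p) ^ (q / p) = u i ^ q := by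
    intro i
    rw [← Real.rpow_mul (hupos i).le]
    congr 1
    field_simp
  simp only [hup] at key
  have hA : (0:ℝ) ≤ ∑ i, w i * u i ^ p :=
    Finset.sum_nonneg fun i _ => mul_nonneg (hw.1 i) (hz i (Finset.mem_univ i))
  have h2 := Real.rpow_le_rpow (Real.rpow_nonneg hA _) key
    (le_of_lt (by positivity : (0:ℝ) < 1/q))
  rwa [← Real.rpow_mul hA, show q / p * (1 / q) = 1 / p by field_simp] at h2

lemma pmean_zero_le (hw : inSimplex w) (hupos : ∀ j, 0 < u j) {q : ℝ} (hq : 0 < q) :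
    pmean u w 0 ≤ pmean u w q := by
  unfold pmean
  rw [if_pos rfl, if_neg hq.ne']
  have key := Real.geom_mean_le_arith_mean_weighted Finset.univ w (fun i => u i ^ q)
    (fun i _ => hw.1 i) hw.2 (fun i _ => (Real.rpow_pos_of_pos (hupos i) q).le)
  rw [prod_rpow_eq hupos] at key
  beta_reduce at key
  have hP : (0:ℝ) ≤ ∏ i, u i ^ w i :=
    Finset.prod_nonneg fun i _ => (Real.rpow_pos_of_pos (hupos i) _).le
  have h2 := Real.rpow_le_rpow (Real.rpow_nonneg hP q) key (by positivity : (0:ℝ) ≤ 1/q)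
  rw [one_div]; rwa [one_div, Real.rpow_rpow_inv hP hq.ne'] at h2

lemma pmean_neg_le_zero (hw : inSimplex w) (hupos : ∀ j, 0 < u j) {p : ℝ} (hp : p < 0) :
    pmean u w p ≤ pmean u w 0 := by
  unfold pmean
  rw [if_pos rfl, if_neg hp.ne]
  have key := Real.geom_mean_le_arith_mean_weighted Finset.univ w (fun i => u i ^ p)
    (fun i _ => hw.1 i) hw.2 (fun i _ => (Real.rpow_pos_of_pos (hupos i) p).le)
  rw [prod_rpow_eq hupos] at key
  beta_reduce at key
  have hPpos : (0:ℝ) < ∏ i, u i ^ w i :=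
    Finset.prod_pos fun i _ => Real.rpow_pos_of_pos (hupos i) _
  have hz : (1:ℝ)/p ≤ 0 := by rw [one_div]; exact inv_nonpos.2 hp.le
  have h2 := Real.rpow_le_rpow_of_nonpos (Real.rpow_pos_of_pos hPpos p) key hz
  rw [one_div]; rwa [one_div, Real.rpow_rpow_inv hPpos.le hp.ne] at h2

lemma pmean_inv (hw : inSimplex w) (hupos : ∀ j, 0 < u j) (p : ℝ) :
    pmean u w p = (pmean (fun i => (u i)⁻¹) w (-p))⁻¹ := by
  unfold pmean
  rcases eq_or_ne p 0 with h | h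
  · subst h
    rw [neg_zero, if_pos rfl, if_pos rfl, ← Finset.prod_inv_distrib]
    exact Finset.prod_congr rfl fun i _ => by
      rw [← Real.inv_rpow (inv_pos.2 (hupos i)).le, inv_inv]
  · rw [if_neg h, if_neg (neg_ne_zero.2 h)]
    have h1 : ∀ i : Fin d, w i * ((u i)⁻¹) ^ (-p) = w i * u i ^ p := fun i => by
      rw [Real.inv_rpow (hupos i).le, Real.rpow_neg (hupos i).le, inv_inv]
    simp only [h1]
    have hA : (0:ℝ) ≤ ∑ i, w i * u i ^ p :=
      Finset.sum_nonneg fun i _ => mul_nonneg (hw.1 i) (Real.rpow_nonneg (hupos i).le p)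
    rw [← Real.rpow_neg hA, show -(1 / -p) = 1 / p by rw [div_neg, neg_neg]]

end Mono

lemma pmean_mono_s16 (h0 : 0 < umin) (h1 : umin ≤ umax) (hw : inSimplex w)
    (hu : ∀ j, u j ∈ Set.Icc umin umax) {p q : ℝ} (hpq : p ≤ q) :
    pmean u w p ≤ pmean u w q := by
  have hupos : ∀ j, 0 < u j := fun j => lt_of_lt_of_le h0 (hu j).1
  have humaxpos : 0 < umax := h0.trans_le h1
  have hinvpos : ∀ j, 0 < (u j)⁻¹ := fun j => inv_pos.2 (hupos j)
  rcases lt_trichotomy p 0 with hp | hp | hp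
  · rcases lt_trichotomy q 0 with hq | hq | hq
    · -- p ≤ q < 0 : use inversion
      have hinvIcc : ∀ j, (u j)⁻¹ ∈ Set.Icc umax⁻¹ umin⁻¹ := fun j =>
        ⟨inv_anti₀ (hupos j) (hu j).2, inv_anti₀ h0 (hu j).1⟩
      have hmono := pmean_mono_pos_s16 (u := fun i => (u i)⁻¹) hw hinvpos
        (neg_pos.2 hq) (neg_le_neg hpq)
      have hqpos : 0 < pmean (fun i => (u i)⁻¹) w (-q) :=
        lt_of_lt_of_le (inv_pos.2 humaxpos)
          (pmean_mem_Icc (inv_pos.2 humaxpos) (inv_anti₀ h0 h1) hw hinvIcc (-q)).1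
      rw [pmean_inv hw hupos p, pmean_inv hw hupos q]
      exact inv_anti₀ hqpos hmono
    · subst hq; exact pmean_neg_le_zero hw hupos hp
    · exact (pmean_neg_le_zero hw hupos hp).trans (pmean_zero_le hw hupos hq)
  · subst hp
    rcases hpq.eq_or_lt with h | h
    · rw [← h]
    · exact pmean_zero_le hw hupos h
  · exact pmean_mono_pos_s16 hw hupos hp hpq

section Main
open Finset

lemma sum_radSign_abs_le {n : ℕ} (ε : Fin n → Bool) (a b : Fin n → ℝ)
    (hab : ∀ i, a i ≤ b i) :
    |(∑ i, radSign (ε i) * a i) - ∑ i, radSign (ε i) * b i| ≤ ∑ i, (b i - a i) := by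
  rw [← Finset.sum_sub_distrib]
  refine (Finset.abs_sum_le_sum_abs _ _).trans (Finset.sum_le_sum fun i _ => ?_)
  have h : radSign (ε i) * a i - radSign (ε i) * b i = radSign (ε i) * (a i - b i) := by ring
  have h1 : |radSign (ε i)| = 1 := by cases hb : ε i <;> simp [radSign, hb]
  rw [h, abs_mul, h1, one_mul, abs_of_nonpos (by linarith [hab i])]
  linarith

set_option maxHeartbeats 1600000 in
lemma massart_main {n : ℕ} (hn : 1 ≤ n) {umin umax : ℝ} (h0 : 0 < umin) (h1 : umin ≤ umax)
    (v : ℝ → Fin n → ℝ)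
    (hvIcc : ∀ p i, v p i ∈ Set.Icc umin umax)
    (hvmono : ∀ p q : ℝ, p ≤ q → ∀ i, v p i ≤ v q i) :
    (1 / n : ℝ) * ((2 : ℝ) ^ n)⁻¹ *
        ∑ ε : Fin n → Bool, (⨆ p : ℝ, ∑ i, radSign (ε i) * v p i)
      ≤ umax * (Real.sqrt ((2 * Real.log 2 + 2 * Real.log n) / n) + 1 / Real.sqrt n) := by
  classical
  have hNpos : (0:ℝ) < n := by exact_mod_cast hn
  have humax : 0 < umax := h0.trans_le h1
  set g : ℝ → ℝ := fun p => ∑ i, v p i with hg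
  have hgmono : ∀ p q : ℝ, p ≤ q → g p ≤ g q := fun p q h =>
    Finset.sum_le_sum fun i _ => hvmono p q h i
  have hglb : ∀ p, (n:ℝ) * umin ≤ g p := by
    intro p
    calc (n:ℝ) * umin = ∑ _i : Fin n, umin := by rw [Finset.sum_const, Finset.card_univ,
      Fintype.card_fin, nsmul_eq_mul]
    _ ≤ g p := Finset.sum_le_sum fun i _ => (hvIcc p i).1
  have hgub : ∀ p, g p ≤ (n:ℝ) * umax := by
    intro p
    calc g p ≤ ∑ _i : Fin n, umax := Finset.sum_le_sum fun i _ => (hvIcc p i).2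
    _ = (n:ℝ) * umax := by rw [Finset.sum_const, Finset.card_univ, Fintype.card_fin, nsmul_eq_mul]
  have hFg : ∀ (ε : Fin n → Bool) (p q : ℝ),
      |(∑ i, radSign (ε i) * v p i) - ∑ i, radSign (ε i) * v q i| ≤ |g p - g q| := by
    intro ε p q
    rcases le_total p q with h | h
    · refine (sum_radSign_abs_le ε (v p) (v q) (hvmono p q h)).trans ?_
      rw [Finset.sum_sub_distrib]
      exact (neg_le_abs _).trans_eq' (by rw [hg]; ring)
    · rw [abs_sub_comm, abs_sub_comm (g p)]
      refine (sum_radSign_abs_le ε (v q) (v p) (hvmono q p h)).trans ?_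
      rw [Finset.sum_sub_distrib]
      exact (neg_le_abs _).trans_eq' (by rw [hg]; ring)
  -- bucketing
  set W : ℝ := umax - umin with hW
  set idx : ℝ → ℕ := fun p => min (n-1) (Nat.floor ((g p - n*umin)/W)) with hidx
  have hidxlt : ∀ p, idx p < n := fun p => lt_of_le_of_lt (min_le_left _ _) (by omega)
  have hWnn : 0 ≤ W := by rw [hW]; linarith
  have hbucket : ∀ p q, idx p = idx q → |g p - g q| ≤ W := by
    rcases eq_or_lt_of_le hWnn with hW0 | hWpos
    · intro p q _
      have hc : ∀ r : ℝ, g r = n * umin := by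
        intro r
        have h2 := hglb r
        have h3 := hgub r
        have h4 : umax = umin := by rw [hW] at hW0; linarith
        rw [h4] at h3
        linarith
      rw [hc p, hc q, sub_self, abs_zero]
      exact hWnn
    · intro p q hpq
      have hx : ∀ r : ℝ, ((idx r : ℝ)) * W ≤ g r - n*umin ∧ g r - n*umin ≤ ((idx r : ℝ) + 1) * W := by
        intro r
        have hx0 : 0 ≤ (g r - n*umin)/W := div_nonneg (by linarith [hglb r]) hWnn
        constructor
        · have h5 : idx r ≤ Nat.floor ((g r - n*umin)/W) := min_le_right _ _
          have h6 : ((idx r : ℕ) : ℝ) ≤ (g r - n*umin)/W :=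
            le_trans (by exact_mod_cast h5) (Nat.floor_le hx0)
          exact (le_div_iff₀ hWpos).1 h6
        · by_cases hc : Nat.floor ((g r - n*umin)/W) ≤ n - 1
          · have h6 : idx r = Nat.floor ((g r - n*umin)/W) := min_eq_right hc
            have h7 : (g r - n*umin)/W ≤ (idx r : ℝ) + 1 := by
              rw [h6]
              exact le_of_lt (Nat.lt_floor_add_one _)
            exact (div_le_iff₀ hWpos).1 h7
          · have h6 : idx r = n - 1 := min_eq_left (le_of_not_ge hc)
            have h8 : ((idx r : ℝ) + 1) = (n : ℝ) := by
              rw [h6]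
              have := Nat.cast_sub hn (R := ℝ)
              rw [this]
              push_cast
              ring
            have h9 : (g r - n*umin)/W ≤ (n:ℝ) := by
              rw [div_le_iff₀ hWpos, hW]
              have := hgub r
              nlinarith
            rw [h8]
            exact (div_le_iff₀ hWpos).1 (by rw [div_le_iff₀ hWpos] at h9; rw [div_le_iff₀ hWpos]; exact h9)
      have hp1 := hx p
      have hq1 := hx q
      rw [hpq] at hp1
      rw [abs_le]
      constructor <;> nlinarith [hp1.1, hp1.2, hq1.1, hq1.2]
  set rep : ℕ → ℝ := fun k => if h : ∃ p, idx p = k then h.choose else 0 with hrep_def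
  have hrep : ∀ p, idx (rep (idx p)) = idx p := by
    intro p
    have hex : ∃ q, idx q = idx p := ⟨p, rfl⟩
    simp only [hrep_def, dif_pos hex]
    exact hex.choose_spec
  have hne : (Finset.range n).Nonempty := Finset.nonempty_range_iff.2 (by omega)
  -- sup over p is bounded by max over the net plus W
  have hsup : ∀ ε : Fin n → Bool, (⨆ p : ℝ, ∑ i, radSign (ε i) * v p i)
      ≤ (Finset.range n).sup' hne (fun k => ∑ i, radSign (ε i) * v (rep k) i) + W := by
    intro ε
    refine ciSup_le fun p => ?_
    have h2 : |(∑ i, radSign (ε i) * v p i) - ∑ i, radSign (ε i) * v (rep (idx p)) i| ≤ W :=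
      (hFg ε p (rep (idx p))).trans (hbucket _ _ (hrep p).symm)
    have h3 : (∑ i, radSign (ε i) * v (rep (idx p)) i)
        ≤ (Finset.range n).sup' hne (fun k => ∑ i, radSign (ε i) * v (rep k) i) :=
      Finset.le_sup' (fun k => ∑ i, radSign (ε i) * v (rep k) i) (Finset.mem_range.2 (hidxlt p))
    have := (abs_le.1 h2).2
    linarith
  -- Massart's finite-class bound
  set L : ℝ := Real.log (2*n) with hL
  have hLpos : 0 < L := Real.log_pos (by exact_mod_cast (by omega : (1:ℤ) < 2*n) : (1:ℝ) < 2*n)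
  set lam : ℝ := Real.sqrt (2*L) / (umax * Real.sqrt n) with hlam
  have hlampos : 0 < lam := div_pos (Real.sqrt_pos.2 (by linarith)) (by positivity)
  have hlam2 : lam^2 = 2*L/(umax^2 * n) := by
    rw [hlam, div_pow, mul_pow, Real.sq_sqrt (by linarith), Real.sq_sqrt hNpos.le]
  have hmgf : ∀ k, ∑ ε : Fin n → Bool, Real.exp (lam * ∑ i, radSign (ε i) * v (rep k) i)
      ≤ (2:ℝ)^n * Real.exp L := by
    intro k
    calc ∑ ε : Fin n → Bool, Real.exp (lam * ∑ i, radSign (ε i) * v (rep k) i)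
        = ∑ ε : Fin n → Bool, ∏ i, Real.exp (lam * (radSign (ε i) * v (rep k) i)) := by
          refine Finset.sum_congr rfl fun ε _ => ?_
          rw [Finset.mul_sum, Real.exp_sum]
    _ = ∏ i, ∑ b : Bool, Real.exp (lam * (radSign b * v (rep k) i)) :=
          (Fintype.prod_sum (fun i b => Real.exp (lam * (radSign b * v (rep k) i)))).symm
    _ ≤ ∏ _i : Fin n, 2 * Real.exp (lam^2 * umax^2 / 2) := by
          refine Finset.prod_le_prod (fun i _ => Finset.sum_nonneg fun b _ => (Real.exp_pos _).le)
            (fun i _ => ?_)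
          rw [Fintype.sum_bool]
          have e1 : lam * (radSign true * v (rep k) i) = lam * v (rep k) i := by
            simp [radSign]
          have e2 : lam * (radSign false * v (rep k) i) = -(lam * v (rep k) i) := by
            simp [radSign]
          rw [e1, e2]
          have h2c : Real.exp (lam * v (rep k) i) + Real.exp (-(lam * v (rep k) i))
              = 2 * Real.cosh (lam * v (rep k) i) := by
            rw [Real.cosh_eq]; ring
          rw [h2c]
          have h3 := Real.cosh_le_exp_half_sq (lam * v (rep k) i)
          have ha := hvIcc (rep k) i
          have h4 : (lam * v (rep k) i)^2 / 2 ≤ lam^2 * umax^2 / 2 := by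
            have h5 : (v (rep k) i)^2 ≤ umax^2 := by nlinarith [ha.1, ha.2, h0]
            have h6 : (lam * v (rep k) i)^2 = lam^2 * (v (rep k) i)^2 := by ring
            nlinarith [sq_nonneg lam]
          have h7 := Real.exp_le_exp.2 h4
          nlinarith [Real.cosh_pos (lam * v (rep k) i)]
    _ = (2:ℝ)^n * Real.exp L := by
          rw [Finset.prod_const, Finset.card_univ, Fintype.card_fin, mul_pow, ← Real.exp_nat_mul]
          congr 1
          rw [hlam2]
          field_simp
  set M : (Fin n → Bool) → ℝ :=
    fun ε => (Finset.range n).sup' hne (fun k => ∑ i, radSign (ε i) * v (rep k) i) with hM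
  set Y : (Fin n → Bool) → ℝ :=
    fun ε => ∑ k ∈ Finset.range n, Real.exp (lam * ∑ i, radSign (ε i) * v (rep k) i) with hY
  have hYpos : ∀ ε, 0 < Y ε :=
    fun ε => Finset.sum_pos (fun k _ => Real.exp_pos _) hne
  have hstep1 : ∀ ε, M ε ≤ (1/lam) * Real.log (Y ε) := by
    intro ε
    obtain ⟨k₀, hk₀, hMk⟩ := Finset.exists_mem_eq_sup' hne
      (fun k => ∑ i, radSign (ε i) * v (rep k) i)
    have h1 : Real.exp (lam * M ε) ≤ Y ε := by
      simp only [hM, hMk, hY]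
      exact Finset.single_le_sum (f := fun k => Real.exp (lam * ∑ i, radSign (ε i) * v (rep k) i))
        (fun k _ => (Real.exp_pos _).le) hk₀
    have h2 : lam * M ε ≤ Real.log (Y ε) := by
      have h3 := Real.log_le_log (Real.exp_pos _) h1
      rwa [Real.log_exp] at h3
    calc M ε = (1/lam) * (lam * M ε) := by
          rw [← mul_assoc, one_div, inv_mul_cancel₀ hlampos.ne', one_mul]
    _ ≤ (1/lam) * Real.log (Y ε) :=
      mul_le_mul_of_nonneg_left h2 (by positivity)
  set T : ℝ := (2:ℝ)^n with hT
  have hTpos : (0:ℝ) < T := by positivity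
  have hcard : (Finset.univ : Finset (Fin n → Bool)).card = 2^n := by
    simp [Finset.card_univ]
  set y0 : ℝ := T⁻¹ * ∑ ε : Fin n → Bool, Y ε with hy0
  have hy0pos : 0 < y0 :=
    mul_pos (by positivity) (Finset.sum_pos (fun ε _ => hYpos ε) ⟨fun _ => true, Finset.mem_univ _⟩)
  have hYsumpos : 0 < ∑ ε : Fin n → Bool, Y ε :=
    Finset.sum_pos (fun ε _ => hYpos ε) ⟨fun _ => true, Finset.mem_univ _⟩
  have hYsum : (∑ ε : Fin n → Bool, Y ε) / y0 = T := by
    rw [hy0, div_eq_iff hy0pos.ne', hy0, ← mul_assoc, mul_inv_cancel₀ hTpos.ne', one_mul]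
  have hstep2 : T⁻¹ * ∑ ε : Fin n → Bool, Real.log (Y ε) ≤ Real.log y0 := by
    have h : ∀ ε : Fin n → Bool, Real.log (Y ε) ≤ Real.log y0 + (Y ε / y0 - 1) := by
      intro ε
      have h4 := Real.log_le_sub_one_of_pos (div_pos (hYpos ε) hy0pos)
      rw [Real.log_div (hYpos ε).ne' hy0pos.ne'] at h4
      linarith
    have hsum : ∑ ε : Fin n → Bool, (Real.log y0 + (Y ε / y0 - 1))
        = T * Real.log y0 + ((∑ ε : Fin n → Bool, Y ε) / y0 - T) := by
      rw [Finset.sum_add_distrib, Finset.sum_const, hcard, Finset.sum_sub_distrib,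
        Finset.sum_const, hcard, ← Finset.sum_div, nsmul_eq_mul, nsmul_eq_mul, hT]
      push_cast
      ring
    calc T⁻¹ * ∑ ε : Fin n → Bool, Real.log (Y ε)
        ≤ T⁻¹ * ∑ ε : Fin n → Bool, (Real.log y0 + (Y ε / y0 - 1)) :=
          mul_le_mul_of_nonneg_left (Finset.sum_le_sum fun ε _ => h ε) (by positivity)
    _ = Real.log y0 := by
        rw [hsum, hYsum, sub_self, add_zero, ← mul_assoc, inv_mul_cancel₀ hTpos.ne', one_mul]
  have hstep3 : y0 ≤ n * Real.exp L := by
    rw [hy0, hY]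
    rw [Finset.sum_comm]
    calc T⁻¹ * ∑ k ∈ Finset.range n, ∑ ε : Fin n → Bool,
          Real.exp (lam * ∑ i, radSign (ε i) * v (rep k) i)
        ≤ T⁻¹ * ∑ k ∈ Finset.range n, (2:ℝ)^n * Real.exp L :=
          mul_le_mul_of_nonneg_left (Finset.sum_le_sum fun k _ => hmgf k) (by positivity)
    _ = n * Real.exp L := by
        rw [Finset.sum_const, Finset.card_range, hT]
        simp [nsmul_eq_mul]
        field_simp
  -- combine
  have hMave : T⁻¹ * ∑ ε : Fin n → Bool, M ε ≤ umax * Real.sqrt n * Real.sqrt (2*L) := by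
    calc T⁻¹ * ∑ ε : Fin n → Bool, M ε
        ≤ T⁻¹ * ∑ ε : Fin n → Bool, (1/lam) * Real.log (Y ε) :=
          mul_le_mul_of_nonneg_left (Finset.sum_le_sum fun ε _ => hstep1 ε) (by positivity)
    _ = (1/lam) * (T⁻¹ * ∑ ε : Fin n → Bool, Real.log (Y ε)) := by
          rw [← Finset.mul_sum]; ring
    _ ≤ (1/lam) * Real.log y0 :=
          mul_le_mul_of_nonneg_left hstep2 (by positivity)
    _ ≤ (1/lam) * (2*L) := by
          refine mul_le_mul_of_nonneg_left ?_ (by positivity)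
          have h8 : Real.log y0 ≤ Real.log ((n:ℝ) * Real.exp L) :=
            Real.log_le_log hy0pos hstep3
          rw [Real.log_mul hNpos.ne' (Real.exp_pos _).ne', Real.log_exp] at h8
          have h9 : Real.log n ≤ L := by
            rw [hL, Real.log_mul two_ne_zero hNpos.ne']
            have := Real.log_pos one_lt_two
            linarith
          linarith
    _ = umax * Real.sqrt n * Real.sqrt (2*L) := by
          rw [hlam, one_div_div, div_mul_eq_mul_div, mul_div_assoc, Real.div_sqrt]
  -- final assembly
  have hT0 : T ≠ 0 := hTpos.ne'
  have h1n : 1 ≤ Real.sqrt n := by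
    rw [show (1:ℝ) = Real.sqrt 1 by simp]
    exact Real.sqrt_le_sqrt (by exact_mod_cast hn)
  have hsqrtn : Real.sqrt n * Real.sqrt n = (n:ℝ) := Real.mul_self_sqrt hNpos.le
  have hsqrtnpos : 0 < Real.sqrt n := Real.sqrt_pos.2 hNpos
  have hsum_le : ∑ ε : Fin n → Bool, (⨆ p : ℝ, ∑ i, radSign (ε i) * v p i)
      ≤ (∑ ε : Fin n → Bool, M ε) + T * W := by
    calc ∑ ε : Fin n → Bool, (⨆ p : ℝ, ∑ i, radSign (ε i) * v p i)
        ≤ ∑ ε : Fin n → Bool, (M ε + W) := Finset.sum_le_sum fun ε _ => hsup ε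
    _ = (∑ ε : Fin n → Bool, M ε) + T * W := by
        rw [Finset.sum_add_distrib, Finset.sum_const, hcard, nsmul_eq_mul, hT]
        push_cast
        ring
  have hmain : (1/(n:ℝ)) * (umax * Real.sqrt n * Real.sqrt (2*L))
      = umax * Real.sqrt ((2 * Real.log 2 + 2 * Real.log n) / n) := by
    have h2L : 2*Real.log 2 + 2*Real.log n = 2*L := by
      rw [hL, Real.log_mul two_ne_zero hNpos.ne']; ring
    have hdiv : (Real.sqrt n) / (n:ℝ) = 1 / Real.sqrt n := by
      rw [div_eq_div_iff hNpos.ne' hsqrtnpos.ne', one_mul, hsqrtn]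
    rw [h2L, Real.sqrt_div (by linarith : (0:ℝ) ≤ 2*L)]
    calc (1/(n:ℝ)) * (umax * Real.sqrt n * Real.sqrt (2*L))
        = umax * Real.sqrt (2*L) * (Real.sqrt n / n) := by ring
    _ = umax * (Real.sqrt (2*L) / Real.sqrt n) := by rw [hdiv]; ring
  have hWn : W / n ≤ umax * (1 / Real.sqrt n) := by
    have hW2 : W ≤ umax := by rw [hW]; linarith
    have hsn : Real.sqrt n ≤ (n:ℝ) := by nlinarith
    have := div_le_div₀ humax.le hW2 hsqrtnpos hsn
    calc W / n ≤ umax / Real.sqrt n := div_le_div₀ humax.le hW2 hsqrtnpos hsn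
    _ = umax * (1 / Real.sqrt n) := by ring
  calc (1/(n:ℝ)) * T⁻¹ * ∑ ε : Fin n → Bool, (⨆ p : ℝ, ∑ i, radSign (ε i) * v p i)
      ≤ (1/(n:ℝ)) * T⁻¹ * ((∑ ε : Fin n → Bool, M ε) + T * W) := by
        apply mul_le_mul_of_nonneg_left hsum_le
        positivity
  _ = (1/(n:ℝ)) * (T⁻¹ * ∑ ε : Fin n → Bool, M ε) + W/n := by
        rw [mul_add]
        congr 1
        · ring
        · rw [show (1/(n:ℝ)) * T⁻¹ * (T*W) = (T⁻¹*T) * (W/n) by ring,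
            inv_mul_cancel₀ hT0, one_mul]
  _ ≤ (1/(n:ℝ)) * (umax * Real.sqrt n * Real.sqrt (2*L)) + umax * (1/Real.sqrt n) := by
        refine add_le_add ?_ hWn
        exact mul_le_mul_of_nonneg_left hMave (by positivity)
  _ = umax * (Real.sqrt ((2 * Real.log 2 + 2 * Real.log n) / n) + 1 / Real.sqrt n) := by
        rw [hmain]; ring

end Main

/-- Bound on the empirical Rademacher complexity of the power mean family with
known weights: the uniform average over sign vectors `ε ∈ {−1,+1}^n` of
`sup_{p ∈ ℝ} Σ_i ε_i M(u_i; w, p)`, divided by `n`, is at most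
`u_max (√((2 log 2 + 2 log n)/n) + c/√n)` for a universal constant `c`. -/
theorem rademacher_pmean_known_weights :
    ∃ c : ℝ, 0 < c ∧
      ∀ (d : ℕ), 1 ≤ d →
      ∀ (umin umax : ℝ), 0 < umin → umin ≤ umax →
      ∀ (w : Fin d → ℝ), inSimplex w →
      ∀ (n : ℕ), 1 ≤ n →
      ∀ (u : Fin n → Fin d → ℝ), (∀ i j, u i j ∈ Set.Icc umin umax) →
        (1 / n : ℝ) * ((2 : ℝ) ^ n)⁻¹ *
            ∑ ε : Fin n → Bool, (⨆ p : ℝ, ∑ i, radSign (ε i) * pmean (u i) w p)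
          ≤ umax * (Real.sqrt ((2 * Real.log 2 + 2 * Real.log n) / n)
              + c / Real.sqrt n) := by
  refine ⟨1, one_pos, ?_⟩
  intro d _hd umin umax h0 h1 w hw n hn u hu
  have h := massart_main hn h0 h1 (fun p i => pmean (u i) w p)
    (fun p i => pmean_mem_Icc h0 h1 hw (hu i) p)
    (fun p q hpq i => pmean_mono_s16 h0 h1 hw (hu i) hpq)
  exact h
end

section
/- Let d ≥ 1, let u, v ∈ ℝ^d have strictly positive entries such that the 2d numbers u_1, …, u_d, v_1, …, v_d are pairwise distinct, and let w ∈ Δ_{d−1} have all coordinates strictly positive. Define f : ℝ → ℝ by f(p) = Σ_{i=1}^d w_i u_i^p − Σ_{i=1}^d w_i v_i^p. Then the zero set {p ∈ ℝ : f(p) = 0} is finite and has at most 2d − 1 elements; moreover, if w_i = 1/d for all i, it has at most d elements. -/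
open Real Set Finset MeasureTheory Classical

set_option maxHeartbeats 1000000

lemma finset_card_zeros (n : ℕ) :
    ∀ (c lam : Fin (n+1) → ℝ), (∀ k, c k ≠ 0) → Function.Injective lam →
    ∀ Z : Finset ℝ, (∀ p ∈ Z, ∑ k, c k * Real.exp (lam k * p) = 0) → Z.card ≤ n := by
  induction n with
  | zero =>
    intro c lam hc _ Z hZ
    rcases Finset.eq_empty_or_nonempty Z with rfl | ⟨p, hp⟩
    · simp
    · have h0 := hZ p hp
      rw [Fin.sum_univ_one] at h0
      exact absurd h0 (mul_ne_zero (hc 0) (Real.exp_ne_zero _))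
  | succ n ih =>
    intro c lam hc hlam Z hZ
    by_contra h
    push_neg at h
    obtain ⟨Z', hZ'sub, hZ'card⟩ := Finset.exists_subset_card_eq (show n + 2 ≤ Z.card by omega)
    set e := Z'.orderIsoOfFin hZ'card with he
    set p : Fin (n+2) → ℝ := fun i => (e i : ℝ) with hp
    have hpmono : StrictMono p := fun i j hij => by
      exact_mod_cast (e.lt_iff_lt.mpr hij)
    have hpz : ∀ i, ∑ k, c k * Real.exp (lam k * p i) = 0 := fun i =>
      hZ _ (hZ'sub (e i).2)
    -- the auxiliary function G and its derivative
    set L : ℝ := lam (Fin.last (n+1)) with hL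
    set G : ℝ → ℝ := fun q => ∑ k, c k * Real.exp ((lam k - L) * q) with hG
    set G' : ℝ → ℝ := fun q => ∑ k, (c k * (lam k - L)) * Real.exp ((lam k - L) * q) with hG'
    have hGderiv : ∀ q, HasDerivAt G (G' q) q := by
      intro q
      apply HasDerivAt.fun_sum
      intro k _
      have h1 : HasDerivAt (fun q : ℝ => (lam k - L) * q) (lam k - L) q := by
        simpa using (hasDerivAt_id q).const_mul (lam k - L)
      have h2 := h1.exp
      have h3 := h2.const_mul (c k)
      refine h3.congr_deriv ?_
      ring
    have hGzero : ∀ i, G (p i) = 0 := by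
      intro i
      have : G (p i) = Real.exp (-L * p i) * ∑ k, c k * Real.exp (lam k * p i) := by
        rw [Finset.mul_sum]
        apply Finset.sum_congr rfl
        intro k _
        have hx : Real.exp ((lam k - L) * p i) = Real.exp (-L * p i) * Real.exp (lam k * p i) := by
          rw [← Real.exp_add]; ring_nf
        rw [hx]; ring
      rw [this, hpz i, mul_zero]
    have hGcont : Continuous G := by
      apply continuous_finset_sum
      intro k _
      fun_prop
    -- Rolle points
    have hq : ∀ i : Fin (n+1), ∃ x ∈ Set.Ioo (p i.castSucc) (p i.succ), G' x = 0 := by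
      intro i
      apply exists_hasDerivAt_eq_zero (hpmono (Fin.castSucc_lt_succ (i := i))) hGcont.continuousOn
        ((hGzero _).trans (hGzero _).symm)
      intro x _
      exact hGderiv x
    choose q hqIoo hqzero using hq
    have hqmono : StrictMono q := by
      intro i j hij
      have h1 : q i < p i.succ := (hqIoo i).2
      have h2 : p j.castSucc < q j := (hqIoo j).1
      have h3 : p i.succ ≤ p j.castSucc := by
        apply hpmono.monotone
        have : (i : ℕ) + 1 ≤ (j : ℕ) := hij
        simp [Fin.le_def, this]
      linarith
    -- apply IH
    set c' : Fin (n+1) → ℝ := fun k => c k.castSucc * (lam k.castSucc - L) with hc'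
    set lam' : Fin (n+1) → ℝ := fun k => lam k.castSucc - L with hlam'
    have hc'ne : ∀ k, c' k ≠ 0 := by
      intro k
      apply mul_ne_zero (hc _)
      intro hEq
      have : lam k.castSucc = L := by linarith [sub_eq_zero.mp hEq]
      exact (Fin.castSucc_lt_last k).ne (hlam this)
    have hlam'inj : Function.Injective lam' := by
      intro a b hab
      have : lam a.castSucc = lam b.castSucc := by
        simpa [hlam'] using congrArg (· + L) hab
      exact Fin.castSucc_injective _ (hlam this)
    have hG'form : ∀ x, G' x = ∑ k : Fin (n+1), c' k * Real.exp (lam' k * x) := by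
      intro x
      show (∑ k : Fin (n+2), c k * (lam k - L) * Real.exp ((lam k - L) * x)) = _
      rw [Fin.sum_univ_castSucc
        (f := fun k : Fin (n+2) => c k * (lam k - L) * Real.exp ((lam k - L) * x))]
      simp [hc', hlam', hL, mul_assoc]
    set Q : Finset ℝ := Finset.image q Finset.univ with hQ
    have hQcard : Q.card = n + 1 := by
      rw [hQ, Finset.card_image_of_injective _ hqmono.injective, Finset.card_univ, Fintype.card_fin]
    have := ih c' lam' hc'ne hlam'inj Q (by
      intro x hx
      rw [hQ, Finset.mem_image] at hx
      obtain ⟨i, _, rfl⟩ := hx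
      rw [← hG'form]
      exact hqzero i)
    omega

lemma finite_ncard_of_forall_finset {Z : Set ℝ} {m : ℕ}
    (h : ∀ t : Finset ℝ, ↑t ⊆ Z → t.card ≤ m) : Z.Finite ∧ Z.ncard ≤ m := by
  have hfin : Z.Finite := by
    by_contra hinf
    obtain ⟨t, hts, htcard⟩ := Set.Infinite.exists_subset_card_eq hinf (m+1)
    have := h t hts
    omega
  refine ⟨hfin, ?_⟩
  rw [Set.ncard_eq_toFinset_card _ hfin]
  exact h hfin.toFinset (by simp)

lemma log_inj_pos {a b : ℝ} (ha : 0 < a) (hb : 0 < b) (h : Real.log a = Real.log b) : a = b := by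
  rw [← Real.exp_log ha, ← Real.exp_log hb, h]

lemma finset_card_zeros' (ι : Type) [Fintype ι] (n : ℕ) (hn : Fintype.card ι = n + 1)
    (c lam : ι → ℝ) (hc : ∀ k, c k ≠ 0) (hlam : Function.Injective lam)
    (Z : Finset ℝ) (hZ : ∀ p ∈ Z, ∑ k, c k * Real.exp (lam k * p) = 0) : Z.card ≤ n := by
  have e : Fin (n+1) ≃ ι := (Fintype.equivFinOfCardEq hn).symm
  apply finset_card_zeros n (c ∘ e) (lam ∘ e) (fun k => hc _) (hlam.comp e.injective) Z
  intro p hp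
  calc ∑ k : Fin (n+1), (c ∘ e) k * Real.exp ((lam ∘ e) k * p)
      = ∑ k, c k * Real.exp (lam k * p) := Equiv.sum_comp e fun k => c k * Real.exp (lam k * p)
    _ = 0 := hZ p hp

lemma general_bound (d : ℕ) (hd : 1 ≤ d)
    (u v : Fin d → ℝ) (hu : ∀ i, 0 < u i) (hv : ∀ i, 0 < v i)
    (huinj : Function.Injective u) (hvinj : Function.Injective v)
    (hcross : ∀ i j, u i ≠ v j)
    (w : Fin d → ℝ) (hwpos : ∀ i, 0 < w i) :
    ∀ Z : Finset ℝ, ↑Z ⊆ {p : ℝ | ∑ i, w i * u i ^ p - ∑ i, w i * v i ^ p = 0} →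
      Z.card ≤ 2 * d - 1 := by
  intro Z hZmem
  set c : Fin d ⊕ Fin d → ℝ := Sum.elim w (fun i => -(w i)) with hc
  set lam : Fin d ⊕ Fin d → ℝ := Sum.elim (fun i => Real.log (u i)) (fun i => Real.log (v i))
    with hlam
  have hcne : ∀ k, c k ≠ 0 := by
    rintro (i | i) <;> simp [hc, (hwpos i).ne', (hwpos i).ne]
  have hlaminj : Function.Injective lam := by
    rintro (i | i) (j | j) h <;> simp only [hlam, Sum.elim_inl, Sum.elim_inr] at h
    · exact congrArg Sum.inl (huinj (log_inj_pos (hu i) (hu j) h))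
    · exact absurd (log_inj_pos (hu i) (hv j) h) (hcross i j)
    · exact absurd (log_inj_pos (hu j) (hv i) h.symm) (hcross j i)
    · exact congrArg Sum.inr (hvinj (log_inj_pos (hv i) (hv j) h))
  obtain ⟨m, hm⟩ : ∃ m, d + d = m + 1 := ⟨d + d - 1, by omega⟩
  have hcard : Fintype.card (Fin d ⊕ Fin d) = m + 1 := by
    simp [Fintype.card_sum, hm]
  have hbound := finset_card_zeros' (Fin d ⊕ Fin d) m hcard c lam hcne hlaminj Z (by
    intro p hp
    have hmem := hZmem hp
    simp only [Set.mem_setOf_eq] at hmem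
    rw [Fintype.sum_sum_type]
    have h1 : ∀ i : Fin d, c (Sum.inl i) * Real.exp (lam (Sum.inl i) * p) = w i * u i ^ p := by
      intro i
      rw [Real.rpow_def_of_pos (hu i)]
      simp [hc, hlam]
    have h2 : ∀ i : Fin d, c (Sum.inr i) * Real.exp (lam (Sum.inr i) * p) = -(w i * v i ^ p) := by
      intro i
      rw [Real.rpow_def_of_pos (hv i)]
      simp [hc, hlam]
    rw [Finset.sum_congr rfl (fun i _ => h1 i), Finset.sum_congr rfl (fun i _ => h2 i),
      Finset.sum_neg_distrib]
    linarith)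
  omega


lemma my_integrable_of_bound {μ : MeasureTheory.Measure ℝ} [IsFiniteMeasure μ] {f : ℝ → ℝ} {C : ℝ}
    (hf : Measurable f) (h : ∀ᵐ s ∂μ, |f s| ≤ C) : Integrable f μ :=
  ⟨hf.aestronglyMeasurable, MeasureTheory.HasFiniteIntegral.of_bounded
    (by simpa [Real.norm_eq_abs] using h)⟩

lemma my_exp_mul_bound {a K x B : ℝ} (h : |a| ≤ K) (hx : |x| ≤ B) :
    Real.exp (a * x) ≤ Real.exp (K * B) := by
  apply Real.exp_le_exp.mpr
  calc a * x ≤ |a * x| := le_abs_self _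
    _ = |a| * |x| := abs_mul _ _
    _ ≤ K * B := by
        apply mul_le_mul h hx (abs_nonneg _) ((abs_nonneg a).trans h)

lemma laplace_zero_bound (lo hi : ℝ) :
    ∀ (k : ℕ) (H : ℝ → ℝ) (C : ℝ), Measurable H → (∀ s, |H s| ≤ C) →
    (∀ s, s ∉ Set.Ioc lo hi → H s = 0) →
    ¬ (H =ᵐ[MeasureTheory.volume.restrict (Set.Ioc lo hi)] 0) →
    ∀ (ε : ℝ), (ε = 1 ∨ ε = -1) →
    ∀ (t : Fin k → ℝ), (∀ s ∈ Set.Ioc lo hi, 0 ≤ ε * H s * ∏ i, (s - t i)) →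
    ∀ Z : Finset ℝ,
      (∀ p ∈ Z, ∫ s, Real.exp (s * p) * H s
        ∂(MeasureTheory.volume.restrict (Set.Ioc lo hi)) = 0) →
    Z.card ≤ k := by
  set μ : MeasureTheory.Measure ℝ := MeasureTheory.volume.restrict (Set.Ioc lo hi) with hμ
  haveI : IsFiniteMeasure μ := ⟨by
    rw [hμ, MeasureTheory.Measure.restrict_apply_univ]; exact measure_Ioc_lt_top⟩
  set K : ℝ := max |lo| |hi| with hK
  have habsK : ∀ s ∈ Set.Ioc lo hi, |s| ≤ K := by
    intro s hs
    rw [abs_le]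
    constructor
    · have : -|lo| ≤ lo := neg_abs_le lo
      have := hs.1
      have : -K ≤ -|lo| := by simp [hK, le_max_left]
      linarith [neg_abs_le lo, hs.1]
    · exact hs.2.trans ((le_abs_self hi).trans (le_max_right _ _))
  have hεabs : ∀ (ε : ℝ), ε = 1 ∨ ε = -1 → ε ≠ 0 := by rintro ε (rfl | rfl) <;> norm_num
  intro k
  induction k with
  | zero =>
    intro H C hmeas hbd hsupp hne ε hε t hsign Z hZ
    simp only [Nat.le_zero, Finset.card_eq_zero]
    apply Finset.eq_empty_of_forall_notMem
    intro p hp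
    have hZp := hZ p hp
    set g : ℝ → ℝ := fun s => ε * (Real.exp (s * p) * H s) with hg
    have hnonneg : 0 ≤ᵐ[μ] g := by
      filter_upwards [MeasureTheory.ae_restrict_mem measurableSet_Ioc] with s hs
      have h0 := hsign s hs
      simp only [Finset.univ_eq_empty, Finset.prod_empty, mul_one] at h0
      have : 0 ≤ Real.exp (s * p) * (ε * H s) := mul_nonneg (Real.exp_pos _).le h0
      simpa [hg] using by linarith [this]
    have hgmeas : Measurable g :=
      ((Real.measurable_exp.comp (measurable_id.mul_const p)).mul hmeas).const_mul ε
    have hgint : Integrable g μ := by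
      apply my_integrable_of_bound hgmeas
      filter_upwards [MeasureTheory.ae_restrict_mem measurableSet_Ioc] with s hs
      have h1 : Real.exp (s * p) ≤ Real.exp (K * |p|) :=
        my_exp_mul_bound (habsK s hs) (le_refl _)
      have h2 : |ε| = 1 := by rcases hε with rfl | rfl <;> norm_num
      calc |g s| = |ε| * (Real.exp (s * p) * |H s|) := by
            rw [hg]; simp [abs_mul, abs_of_pos (Real.exp_pos _)]
        _ ≤ 1 * (Real.exp (K * |p|) * C) := by
            rw [h2]
            apply mul_le_mul_of_nonneg_left _ zero_le_one
            apply mul_le_mul h1 (hbd s) (abs_nonneg _) (Real.exp_pos _).le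
        _ = Real.exp (K * |p|) * C := one_mul _
    have hpos : 0 < ∫ s, g s ∂μ := by
      rw [MeasureTheory.integral_pos_iff_support_of_nonneg_ae hnonneg hgint]
      have hsupport : Function.support g = {s | H s ≠ 0} := by
        ext s
        simp only [Function.support, Set.mem_setOf_eq, hg]
        constructor
        · intro h h'; apply h; rw [h']; ring
        · intro h h'
          exact h (by
            rcases mul_eq_zero.mp h' with h'' | h''
            · exact absurd h'' (hεabs ε hε)
            · rcases mul_eq_zero.mp h'' with h3 | h3
              · exact absurd h3 (Real.exp_ne_zero _)
              · exact h3)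
      rw [hsupport]
      rw [pos_iff_ne_zero]
      intro hzero
      apply hne
      rw [Filter.eventuallyEq_iff_exists_mem]
      refine ⟨{s | H s = 0}, ?_, fun s hs => hs⟩
      rw [MeasureTheory.mem_ae_iff]
      have hcompl : {s : ℝ | H s = 0}ᶜ = {s | H s ≠ 0} := by ext s; simp
      rw [hcompl]; exact hzero
    have : (∫ s, g s ∂μ) = ε * ∫ s, Real.exp (s * p) * H s ∂μ := by
      rw [hg, MeasureTheory.integral_const_mul]
    rw [this, hZp, mul_zero] at hpos
    exact lt_irrefl _ hpos
  | succ k ih =>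
    intro H C hmeas hbd hsupp hne ε hε t hsign Z hZ
    by_contra hcon
    push_neg at hcon
    obtain ⟨Z', hZ'sub, hZ'card⟩ := Finset.exists_subset_card_eq (show k + 2 ≤ Z.card by omega)
    set e := Z'.orderIsoOfFin hZ'card with he
    set p : Fin (k+2) → ℝ := fun i => (e i : ℝ) with hp
    have hpmono : StrictMono p := fun i j hij => by exact_mod_cast (e.lt_iff_lt.mpr hij)
    have hpz : ∀ i, (∫ s, Real.exp (s * p i) * H s ∂μ) = 0 := fun i => hZ _ (hZ'sub (e i).2)
    set τ : ℝ := t 0 with hτ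
    set K' : ℝ := K + |τ| with hK'
    have hK'bd : ∀ s ∈ Set.Ioc lo hi, |s - τ| ≤ K' := by
      intro s hs
      calc |s - τ| ≤ |s| + |τ| := abs_sub _ _
        _ ≤ K + |τ| := by linarith [habsK s hs]
    have hC0 : 0 ≤ C := (abs_nonneg _).trans (hbd lo)
    have hK'0 : 0 ≤ K' :=
      add_nonneg ((abs_nonneg lo).trans (le_max_left _ _)) (abs_nonneg τ)
    set H1 : ℝ → ℝ := fun s => (s - τ) * H s with hH1
    set D : ℝ → ℝ := fun x => ∫ s, ((s - τ) * Real.exp ((s - τ) * x)) * H s ∂μ with hD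
    set G : ℝ → ℝ := fun x => ∫ s, Real.exp ((s - τ) * x) * H s ∂μ with hG
    have hmeasF : ∀ x : ℝ, Measurable fun s => Real.exp ((s - τ) * x) * H s := fun x =>
      (Real.measurable_exp.comp ((measurable_id.sub_const τ).mul_const x)).mul hmeas
    have hmeasF' : ∀ x : ℝ, Measurable fun s => ((s - τ) * Real.exp ((s - τ) * x)) * H s :=
      fun x => ((measurable_id.sub_const τ).mul
        (Real.measurable_exp.comp ((measurable_id.sub_const τ).mul_const x))).mul hmeas
    have hGderiv : ∀ x₀ : ℝ, HasDerivAt G (D x₀) x₀ := by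
      intro x₀
      have key := hasDerivAt_integral_of_dominated_loc_of_deriv_le
        (μ := μ) (x₀ := x₀)
        (F := fun x s => Real.exp ((s - τ) * x) * H s)
        (F' := fun x s => ((s - τ) * Real.exp ((s - τ) * x)) * H s)
        (bound := fun _ => K' * Real.exp (K' * (|x₀| + 1)) * C)
        (s := Metric.ball x₀ 1) (Metric.ball_mem_nhds x₀ one_pos) ?_ ?_ ?_ ?_ ?_ ?_
      · exact key.2
      · exact Filter.Eventually.of_forall fun x => (hmeasF x).aestronglyMeasurable
      · apply my_integrable_of_bound (hmeasF x₀)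
        filter_upwards [MeasureTheory.ae_restrict_mem measurableSet_Ioc] with s hs
        have h1 : Real.exp ((s - τ) * x₀) ≤ Real.exp (K' * |x₀|) :=
          my_exp_mul_bound (hK'bd s hs) (le_refl _)
        calc |Real.exp ((s - τ) * x₀) * H s| = Real.exp ((s - τ) * x₀) * |H s| := by
              rw [abs_mul, abs_of_pos (Real.exp_pos _)]
          _ ≤ Real.exp (K' * |x₀|) * C :=
              mul_le_mul h1 (hbd s) (abs_nonneg _) (Real.exp_pos _).le
      · exact (hmeasF' x₀).aestronglyMeasurable
      · filter_upwards [MeasureTheory.ae_restrict_mem measurableSet_Ioc] with s hs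
        intro x hx
        have hxb : |x| ≤ |x₀| + 1 := by
          have := Metric.mem_ball.mp hx
          rw [Real.dist_eq] at this
          calc |x| = |x₀ + (x - x₀)| := by ring_nf
            _ ≤ |x₀| + |x - x₀| := abs_add_le _ _
            _ ≤ |x₀| + 1 := by linarith
        have h1 : Real.exp ((s - τ) * x) ≤ Real.exp (K' * (|x₀| + 1)) :=
          my_exp_mul_bound (hK'bd s hs) hxb
        rw [Real.norm_eq_abs]
        calc |((s - τ) * Real.exp ((s - τ) * x)) * H s|
            = |s - τ| * Real.exp ((s - τ) * x) * |H s| := by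
              rw [abs_mul, abs_mul, abs_of_pos (Real.exp_pos _)]
          _ ≤ K' * Real.exp (K' * (|x₀| + 1)) * C := by
              apply mul_le_mul _ (hbd s) (abs_nonneg _)
              · positivity
              · exact mul_le_mul (hK'bd s hs) h1 (Real.exp_pos _).le hK'0
      · exact MeasureTheory.integrable_const _
      · apply Filter.Eventually.of_forall
        intro s x _
        have h1 : HasDerivAt (fun x : ℝ => (s - τ) * x) (s - τ) x := by
          simpa using (hasDerivAt_id x).const_mul (s - τ)
        have h2 := (h1.exp).mul_const (H s)
        refine h2.congr_deriv ?_
        ring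
    have hGzero : ∀ i, G (p i) = 0 := by
      intro i
      have e1 : G (p i) = ∫ s, Real.exp (-(τ * p i)) * (Real.exp (s * p i) * H s) ∂μ := by
        apply MeasureTheory.integral_congr_ae
        apply Filter.Eventually.of_forall
        intro s
        show Real.exp ((s - τ) * p i) * H s
          = Real.exp (-(τ * p i)) * (Real.exp (s * p i) * H s)
        rw [← mul_assoc, ← Real.exp_add]
        congr 2
        ring
      rw [e1, MeasureTheory.integral_const_mul, hpz i, mul_zero]
    have hGcont : Continuous G := by
      rw [continuous_iff_continuousAt]; intro x; exact (hGderiv x).continuousAt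
    have hq : ∀ i : Fin (k+1), ∃ x ∈ Set.Ioo (p i.castSucc) (p i.succ), D x = 0 := by
      intro i
      exact exists_hasDerivAt_eq_zero (hpmono (Fin.castSucc_lt_succ (i := i))) hGcont.continuousOn
        ((hGzero _).trans (hGzero _).symm) (fun x _ => hGderiv x)
    choose q hqIoo hqzero using hq
    have hqmono : StrictMono q := by
      intro i j hij
      have h1 : q i < p i.succ := (hqIoo i).2
      have h2 : p j.castSucc < q j := (hqIoo j).1
      have h3 : p i.succ ≤ p j.castSucc := by
        apply hpmono.monotone
        have : (i : ℕ) + 1 ≤ (j : ℕ) := hij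
        simp [Fin.le_def, this]
      linarith
    have hF1zero : ∀ i, (∫ s, Real.exp (s * q i) * H1 s ∂μ) = 0 := by
      intro i
      have hDval : D (q i) = Real.exp (-(τ * q i)) * ∫ s, Real.exp (s * q i) * H1 s ∂μ := by
        have e1 : D (q i) = ∫ s, Real.exp (-(τ * q i)) * (Real.exp (s * q i) * H1 s) ∂μ := by
          apply MeasureTheory.integral_congr_ae
          apply Filter.Eventually.of_forall
          intro s
          show ((s - τ) * Real.exp ((s - τ) * q i)) * H s
            = Real.exp (-(τ * q i)) * (Real.exp (s * q i) * H1 s)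
          have hexp : Real.exp ((s - τ) * q i)
              = Real.exp (-(τ * q i)) * Real.exp (s * q i) := by
            rw [← Real.exp_add]; congr 1; ring
          rw [hexp, hH1]
          ring
        rw [e1, MeasureTheory.integral_const_mul]
      have h0 := hqzero i
      rw [hDval] at h0
      rcases mul_eq_zero.mp h0 with h1 | h1
      · exact absurd h1 (Real.exp_ne_zero _)
      · exact h1
    set Q : Finset ℝ := Finset.image q Finset.univ with hQ
    have hQcard : Q.card = k + 1 := by
      rw [hQ, Finset.card_image_of_injective _ hqmono.injective, Finset.card_univ,
        Fintype.card_fin]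
    have hbd1 : ∀ s, |H1 s| ≤ K' * C := by
      intro s
      by_cases hs : s ∈ Set.Ioc lo hi
      · rw [hH1]
        simp only []
        rw [abs_mul]
        exact mul_le_mul (hK'bd s hs) (hbd s) (abs_nonneg _) hK'0
      · rw [hH1]; simp only []
        rw [hsupp s hs, mul_zero, abs_zero]
        exact mul_nonneg hK'0 hC0
    have hmeas1 : Measurable H1 := (measurable_id.sub_const τ).mul hmeas
    have hsupp1 : ∀ s, s ∉ Set.Ioc lo hi → H1 s = 0 := by
      intro s hs
      rw [hH1]; simp only []
      rw [hsupp s hs, mul_zero]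
    have hne1 : ¬ (H1 =ᵐ[μ] 0) := by
      intro h1
      apply hne
      have h2 : ∀ᵐ s ∂μ, s ≠ τ := by
        rw [MeasureTheory.ae_iff]
        have hset : {s : ℝ | ¬ s ≠ τ} = {τ} := by ext s; simp
        rw [hset, hμ, MeasureTheory.Measure.restrict_apply (measurableSet_singleton τ)]
        exact MeasureTheory.measure_mono_null Set.inter_subset_left Real.volume_singleton
      filter_upwards [h1, h2] with s hs1 hs2
      have : (s - τ) * H s = 0 := hs1
      rcases mul_eq_zero.mp this with h3 | h3
      · exact absurd (by linarith [sub_eq_zero.mp h3] : s = τ) hs2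
      · exact h3
    have hsign1 : ∀ s ∈ Set.Ioc lo hi,
        0 ≤ ε * H1 s * ∏ i : Fin k, (s - (fun i : Fin k => t i.succ) i) := by
      intro s hs
      have h0 := hsign s hs
      rw [Fin.prod_univ_succ] at h0
      calc (0:ℝ) ≤ ε * H s * ((s - t 0) * ∏ i : Fin k, (s - t i.succ)) := h0
        _ = ε * H1 s * ∏ i : Fin k, (s - t i.succ) := by rw [hH1]; ring
    have hfinal := ih H1 (K' * C) hmeas1 hbd1 hsupp1 hne1 ε hε
      (fun i : Fin k => t i.succ) hsign1 Q (by
        intro x hx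
        rw [hQ, Finset.mem_image] at hx
        obtain ⟨i, _, rfl⟩ := hx
        exact hF1zero i)
    omega

section Comb
variable {d' : ℕ} (α β : Fin (d'+1) → ℝ)

noncomputable def epsf (j : Fin (d'+1)) : ℝ := if β j < α j then 1 else -1

noncomputable def mf (j : Fin (d'+1)) : ℝ := min (α j) (β j)
noncomputable def Mf (j : Fin (d'+1)) : ℝ := max (α j) (β j)

noncomputable def Tf (j : Fin (d'+1)) (s : ℝ) : ℝ :=
  (if s ≤ α j then 1 else 0) - (if s ≤ β j then 1 else 0)

noncomputable def Hf (s : ℝ) : ℝ := ∑ j, Tf α β j s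

lemma epsf_sq (j) : epsf α β j * epsf α β j = 1 := by
  unfold epsf; split <;> norm_num

lemma epsf_cases (j) : epsf α β j = 1 ∨ epsf α β j = -1 := by
  unfold epsf; split <;> simp

variable {α β}
variable (hα : StrictMono α) (hβ : StrictMono β) (hdisj : ∀ i j, α i ≠ β j)

include hα hβ in
lemma mf_mono : StrictMono (mf α β) := by
  intro i j hij
  exact lt_min ((min_le_left _ _).trans_lt (hα hij)) ((min_le_right _ _).trans_lt (hβ hij))

include hα hβ in
lemma Mf_mono : StrictMono (Mf α β) := by
  intro i j hij
  exact max_lt ((hα hij).trans_le (le_max_left _ _)) ((hβ hij).trans_le (le_max_right _ _))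

include hdisj in
lemma mf_lt_Mf (j) : mf α β j < Mf α β j := min_lt_max.mpr (hdisj j j)

lemma Tf_of_mem {j s} (h1 : mf α β j < s) (h2 : s ≤ Mf α β j) : Tf α β j s = epsf α β j := by
  unfold Tf epsf
  by_cases hP : β j < α j
  · have hm : mf α β j = β j := min_eq_right hP.le
    have hM : Mf α β j = α j := max_eq_left hP.le
    rw [hm] at h1; rw [hM] at h2
    rw [if_pos h2, if_neg (not_le.mpr h1), if_pos hP]
    norm_num
  · have hle : α j ≤ β j := not_lt.mp hP
    have hm : mf α β j = α j := min_eq_left hle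
    have hM : Mf α β j = β j := max_eq_right hle
    rw [hm] at h1; rw [hM] at h2
    rw [if_neg (not_le.mpr h1), if_pos h2, if_neg hP]
    norm_num

lemma Tf_of_not_mem {j s} (h : ¬ (mf α β j < s ∧ s ≤ Mf α β j)) : Tf α β j s = 0 := by
  unfold Tf
  rcases not_and_or.mp h with h1 | h2
  · push_neg at h1
    have hsa : s ≤ α j := h1.trans (min_le_left _ _)
    have hsb : s ≤ β j := h1.trans (min_le_right _ _)
    rw [if_pos hsa, if_pos hsb]; ring
  · push_neg at h2
    have hsa : ¬ s ≤ α j := not_le.mpr ((le_max_left _ _).trans_lt h2)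
    have hsb : ¬ s ≤ β j := not_le.mpr ((le_max_right _ _).trans_lt h2)
    rw [if_neg hsa, if_neg hsb]; ring

lemma Tf_abs_le (j s) : |Tf α β j s| ≤ 1 := by
  unfold Tf; split <;> split <;> norm_num

include hα hβ in
lemma cover_sign {i j : Fin (d'+1)} {s : ℝ}
    (hi1 : mf α β i < s) (hi2 : s ≤ Mf α β i)
    (hj1 : mf α β j < s) (hj2 : s ≤ Mf α β j) : (β i < α i ↔ β j < α j) := by
  constructor
  · intro hPi
    by_contra hPj
    have hle : α j ≤ β j := not_lt.mp hPj
    have h1 : β i < s := by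
      have : mf α β i = β i := min_eq_right hPi.le
      rwa [this] at hi1
    have h2 : s ≤ α i := by
      have : Mf α β i = α i := max_eq_left hPi.le
      rwa [this] at hi2
    have h3 : α j < s := by
      have : mf α β j = α j := min_eq_left hle
      rwa [this] at hj1
    have h4 : s ≤ β j := by
      have : Mf α β j = β j := max_eq_right hle
      rwa [this] at hj2
    have hij : j < i := hα.lt_iff_lt.mp (h3.trans_le h2)
    have hji : i < j := hβ.lt_iff_lt.mp (h1.trans_le h4)
    exact absurd hij (not_lt.mpr hji.le)
  · intro hPj
    by_contra hPi
    have hle : α i ≤ β i := not_lt.mp hPi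
    have h1 : β j < s := by
      have : mf α β j = β j := min_eq_right hPj.le
      rwa [this] at hj1
    have h2 : s ≤ α j := by
      have : Mf α β j = α j := max_eq_left hPj.le
      rwa [this] at hj2
    have h3 : α i < s := by
      have : mf α β i = α i := min_eq_left hle
      rwa [this] at hi1
    have h4 : s ≤ β i := by
      have : Mf α β i = β i := max_eq_right hle
      rwa [this] at hi2
    have hij : i < j := hα.lt_iff_lt.mp (h3.trans_le h2)
    have hji : j < i := hβ.lt_iff_lt.mp (h1.trans_le h4)
    exact absurd hij (not_lt.mpr hji.le)

include hα hβ in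
lemma Hf_lower {j : Fin (d'+1)} {s : ℝ} (h1 : mf α β j < s) (h2 : s ≤ Mf α β j) :
    1 ≤ epsf α β j * Hf α β s := by
  unfold Hf
  rw [Finset.mul_sum]
  have hterm : ∀ i : Fin (d'+1), 0 ≤ epsf α β j * Tf α β i s := by
    intro i
    by_cases hc : mf α β i < s ∧ s ≤ Mf α β i
    · rw [Tf_of_mem hc.1 hc.2]
      have hiff := cover_sign hα hβ hc.1 hc.2 h1 h2
      have : epsf α β i = epsf α β j := by
        unfold epsf
        by_cases hPj : β j < α j
        · rw [if_pos (hiff.mpr hPj), if_pos hPj]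
        · rw [if_neg (fun h => hPj (hiff.mp h)), if_neg hPj]
      rw [this, epsf_sq]
      norm_num
    · rw [Tf_of_not_mem hc, mul_zero]
  have hj : epsf α β j * Tf α β j s = 1 := by rw [Tf_of_mem h1 h2, epsf_sq]
  calc (1:ℝ) = epsf α β j * Tf α β j s := hj.symm
    _ ≤ ∑ i, epsf α β j * Tf α β i s :=
        Finset.single_le_sum (fun i _ => hterm i) (Finset.mem_univ j)


def chg (i : Fin d') : Prop := ¬ ((β i.castSucc < α i.castSucc) ↔ (β i.succ < α i.succ))

variable (α β) in
noncomputable def tf (i : Fin d') : ℝ :=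
  if chg (α := α) (β := β) i then mf α β i.succ else mf α β 0

lemma parity (j : Fin (d'+1)) :
    epsf α β j * ∏ i ∈ Finset.univ.filter (fun i : Fin d' => (j:ℕ) ≤ (i:ℕ)),
      (if chg (α := α) (β := β) i then (-1:ℝ) else 1) = epsf α β (Fin.last d') := by
  induction j using Fin.reverseInduction with
  | last =>
    have hempty : Finset.univ.filter (fun i : Fin d' => ((Fin.last d' : Fin (d'+1)):ℕ) ≤ (i:ℕ))
        = ∅ := by
      apply Finset.filter_false_of_mem
      intro i _
      simp only [Fin.val_last]
      omega
    rw [hempty, Finset.prod_empty, mul_one]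
  | cast i IH =>
    have hfe : Finset.univ.filter (fun x : Fin d' => ((i.castSucc : Fin (d'+1)):ℕ) ≤ (x:ℕ))
        = insert i (Finset.univ.filter (fun x : Fin d' => ((i.succ : Fin (d'+1)):ℕ) ≤ (x:ℕ))) := by
      ext x
      simp only [Finset.mem_filter, Finset.mem_univ, true_and, Finset.mem_insert,
        Fin.coe_castSucc, Fin.val_succ]
      constructor
      · intro h
        by_cases hx : x = i
        · exact Or.inl hx
        · right
          have : (x:ℕ) ≠ (i:ℕ) := fun hh => hx (Fin.ext hh)
          omega
      · rintro (rfl | h)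
        · exact le_rfl
        · omega
    have hnm : i ∉ Finset.univ.filter (fun x : Fin d' => ((i.succ : Fin (d'+1)):ℕ) ≤ (x:ℕ)) := by
      simp [Fin.val_succ]
    rw [hfe, Finset.prod_insert hnm, ← mul_assoc]
    have key : epsf α β i.castSucc * (if chg (α := α) (β := β) i then (-1:ℝ) else 1)
        = epsf α β i.succ := by
      unfold epsf chg
      by_cases h1 : β i.castSucc < α i.castSucc <;> by_cases h2 : β i.succ < α i.succ <;>
        simp [h1, h2]
    rw [key]
    exact IH

lemma prod_sign {k : ℕ} (f : Fin k → ℝ) (S : Finset (Fin k))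
    (hneg : ∀ i ∈ S, f i ≤ 0) (hpos : ∀ i ∉ S, 0 ≤ f i) :
    0 ≤ (-1:ℝ)^S.card * ∏ i, f i := by
  have h1 : ∏ i ∈ S, f i = (-1:ℝ)^S.card * ∏ i ∈ S, (-(f i)) := by
    calc ∏ i ∈ S, f i = ∏ i ∈ S, ((-1:ℝ) * (-(f i))) := by
          apply Finset.prod_congr rfl; intro i _; ring
      _ = (∏ _i ∈ S, (-1:ℝ)) * ∏ i ∈ S, (-(f i)) := Finset.prod_mul_distrib
      _ = (-1:ℝ)^S.card * ∏ i ∈ S, (-(f i)) := by rw [Finset.prod_const]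
  have h2 : 0 ≤ ∏ i ∈ S, (-(f i)) := Finset.prod_nonneg (fun i hi => by linarith [hneg i hi])
  have h3 : 0 ≤ ∏ i ∈ Sᶜ, f i :=
    Finset.prod_nonneg (fun i hi => hpos i (Finset.mem_compl.mp hi))
  have h4 : ∏ i, f i = (∏ i ∈ S, f i) * ∏ i ∈ Sᶜ, f i := (Finset.prod_mul_prod_compl S f).symm
  rw [h4, h1]
  have h5 : (-1:ℝ)^S.card * ((-1:ℝ)^S.card * (∏ i ∈ S, -(f i)) * ∏ i ∈ Sᶜ, f i)
      = ((-1:ℝ)^(S.card + S.card)) * ((∏ i ∈ S, -(f i)) * ∏ i ∈ Sᶜ, f i) := by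
    rw [pow_add]; ring
  rw [h5, Even.neg_one_pow ⟨S.card, rfl⟩, one_mul]
  exact mul_nonneg h2 h3

include hα hβ hdisj in
lemma gap_le {j : Fin (d'+1)} {i : Fin d'} (hij : (j:ℕ) ≤ (i:ℕ))
    (hc : chg (α := α) (β := β) i) : Mf α β j ≤ mf α β i.succ := by
  have hjn : j < i.succ := by
    rw [Fin.lt_def, Fin.val_succ]; omega
  by_cases hPj : β j < α j <;> by_cases hPn : β i.succ < α i.succ
  · have hPc : ¬ β i.castSucc < α i.castSucc := fun h => hc (iff_of_true h hPn)
    have hjc : j < i.castSucc := by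
      rw [Fin.lt_def, Fin.coe_castSucc]
      have h1 : j ≠ i.castSucc := fun h => hPc (h ▸ hPj)
      have h2 : (j:ℕ) ≠ (i.castSucc:ℕ) := fun hh => h1 (Fin.ext hh)
      simp only [Fin.coe_castSucc] at h2
      omega
    apply le_of_lt
    unfold Mf mf
    rw [max_eq_left hPj.le, min_eq_right hPn.le]
    calc α j < α i.castSucc := hα hjc
      _ ≤ β i.castSucc := not_lt.mp hPc
      _ < β i.succ := hβ (Fin.castSucc_lt_succ (i := i))
  · apply le_of_lt
    unfold Mf mf
    rw [max_eq_left hPj.le, min_eq_left (not_lt.mp hPn)]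
    exact hα hjn
  · apply le_of_lt
    unfold Mf mf
    rw [max_eq_right (not_lt.mp hPj), min_eq_right hPn.le]
    exact hβ hjn
  · have hPc : β i.castSucc < α i.castSucc := by
      by_contra h
      exact hc (iff_of_false h hPn)
    have hjc : j < i.castSucc := by
      rw [Fin.lt_def, Fin.coe_castSucc]
      have h1 : j ≠ i.castSucc := fun h => hPj (h ▸ hPc)
      have h2 : (j:ℕ) ≠ (i.castSucc:ℕ) := fun hh => h1 (Fin.ext hh)
      simp only [Fin.coe_castSucc] at h2
      omega
    apply le_of_lt
    unfold Mf mf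
    rw [max_eq_right (not_lt.mp hPj), min_eq_left (not_lt.mp hPn)]
    calc β j < β i.castSucc := hβ hjc
      _ < α i.castSucc := hPc
      _ < α i.succ := hα (Fin.castSucc_lt_succ (i := i))

include hα hβ hdisj in
lemma Hf_sign : ∀ s ∈ Set.Ioc (mf α β 0) (Mf α β (Fin.last d')),
    0 ≤ epsf α β (Fin.last d') * Hf α β s * ∏ i, (s - tf α β i) := by
  intro s hs
  by_cases hcov : ∃ j, mf α β j < s ∧ s ≤ Mf α β j
  · obtain ⟨j, hj1, hj2⟩ := hcov
    have hfac_pos : ∀ i : Fin d', (i:ℕ) < (j:ℕ) → 0 < s - tf α β i := by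
      intro i hij
      unfold tf
      split
      · rw [sub_pos]
        calc mf α β i.succ ≤ mf α β j := by
              apply (mf_mono hα hβ).monotone
              rw [Fin.le_def, Fin.val_succ]
              omega
          _ < s := hj1
      · rw [sub_pos]
        exact hs.1
    have hfac_neg : ∀ i : Fin d', (j:ℕ) ≤ (i:ℕ) → chg (α := α) (β := β) i →
        s - tf α β i ≤ 0 := by
      intro i hij hc
      unfold tf
      rw [if_pos hc, sub_nonpos]
      exact hj2.trans (gap_le hα hβ hdisj hij hc)
    set S : Finset (Fin d') := Finset.filter (fun i => chg (α := α) (β := β) i) (Finset.filter (fun i : Fin d' => (j:ℕ) ≤ (i:ℕ)) Finset.univ) with hS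
    have hSneg : ∀ i ∈ S, s - tf α β i ≤ 0 := by
      intro i hi
      rw [hS, Finset.mem_filter, Finset.mem_filter] at hi
      exact hfac_neg i hi.1.2 hi.2
    have hSpos : ∀ i ∉ S, 0 ≤ s - tf α β i := by
      intro i hi
      rw [hS, Finset.mem_filter, Finset.mem_filter] at hi
      push_neg at hi
      by_cases hc : chg (α := α) (β := β) i
      · have hij : (i:ℕ) < (j:ℕ) := by
          by_contra hcon
          exact absurd hc (hi ⟨Finset.mem_univ i, by omega⟩)
        exact (hfac_pos i hij).le
      · unfold tf
        rw [if_neg hc, sub_nonneg]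
        exact hs.1.le
    have hprod := prod_sign (fun i => s - tf α β i) S hSneg hSpos
    have hpar := parity (α := α) (β := β) j
    have hprod_ite : (∏ i ∈ Finset.univ.filter (fun i : Fin d' => (j:ℕ) ≤ (i:ℕ)),
        (if chg (α := α) (β := β) i then (-1:ℝ) else 1)) = (-1:ℝ)^S.card := by
      rw [Finset.prod_ite, Finset.prod_const, Finset.prod_const_one, mul_one, hS]
    have hLcN : epsf α β (Fin.last d') = epsf α β j * (-1:ℝ)^S.card := by
      rw [← hpar, hprod_ite]
    have hHj := Hf_lower hα hβ hj1 hj2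
    calc (0:ℝ) ≤ (epsf α β j * Hf α β s) * ((-1:ℝ)^S.card * ∏ i, (s - tf α β i)) :=
          mul_nonneg (zero_le_one.trans hHj) hprod
      _ = (epsf α β j * (-1:ℝ)^S.card) * Hf α β s * ∏ i, (s - tf α β i) := by ring
      _ = epsf α β (Fin.last d') * Hf α β s * ∏ i, (s - tf α β i) := by rw [← hLcN]
  · push_neg at hcov
    have hH0 : Hf α β s = 0 := Finset.sum_eq_zero (fun j _ => Tf_of_not_mem (by
      intro hcon
      exact absurd hcon.2 (not_le.mpr (hcov j hcon.1))))
    rw [hH0, mul_zero, zero_mul]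


include hα hβ in
lemma Hf_supp : ∀ s, s ∉ Set.Ioc (mf α β 0) (Mf α β (Fin.last d')) → Hf α β s = 0 := by
  intro s hs
  apply Finset.sum_eq_zero
  intro j _
  apply Tf_of_not_mem
  rintro ⟨h1, h2⟩
  apply hs
  constructor
  · exact lt_of_le_of_lt ((mf_mono hα hβ).monotone (Fin.zero_le j)) h1
  · exact h2.trans ((Mf_mono hα hβ).monotone (Fin.le_last j))

lemma Hf_bound : ∀ s, |Hf α β s| ≤ (d' + 1 : ℝ) := by
  intro s
  calc |Hf α β s| ≤ ∑ j, |Tf α β j s| := Finset.abs_sum_le_sum_abs _ _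
    _ ≤ ∑ _j : Fin (d'+1), (1:ℝ) := Finset.sum_le_sum (fun j _ => Tf_abs_le j s)
    _ = (d'+1 : ℝ) := by simp

lemma Hf_meas : Measurable (Hf α β) := by
  apply Finset.measurable_sum
  intro j _
  apply Measurable.sub
  · exact Measurable.ite measurableSet_Iic measurable_const measurable_const
  · exact Measurable.ite measurableSet_Iic measurable_const measurable_const

end Comb

lemma exp_integral (a b p : ℝ) (hab : a ≤ b) :
    p * ∫ s in Set.Ioc a b, Real.exp (s * p) = Real.exp (b * p) - Real.exp (a * p) := by
  rcases eq_or_ne p 0 with rfl | hp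
  · simp
  · have h1 : ∀ s ∈ Set.uIcc a b, HasDerivAt (fun u => Real.exp (u * p) / p)
        (Real.exp (s * p)) s := by
      intro s _
      have h := (((hasDerivAt_id s).mul_const p).exp).div_const p
      refine h.congr_deriv ?_
      simp only [id_eq, one_mul]
      rw [mul_div_cancel_right₀ _ hp]
    have h2 : IntervalIntegrable (fun s => Real.exp (s * p)) MeasureTheory.volume a b :=
      (Real.continuous_exp.comp (continuous_id.mul continuous_const)).intervalIntegrable a b
    have h3 := intervalIntegral.integral_eq_sub_of_hasDerivAt h1 h2
    rw [intervalIntegral.integral_of_le hab] at h3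
    rw [h3]
    field_simp

lemma uniform_core (d' : ℕ) (α β : Fin (d'+1) → ℝ) (hα : StrictMono α) (hβ : StrictMono β)
    (hdisj : ∀ i j, α i ≠ β j) (Z : Finset ℝ)
    (hZ : ∀ p ∈ Z, (∑ j, Real.exp (α j * p)) - (∑ j, Real.exp (β j * p)) = 0) :
    Z.card ≤ d' + 1 := by
  set lo := mf α β 0 with hlo
  set hi := Mf α β (Fin.last d') with hhi
  set μ := MeasureTheory.volume.restrict (Set.Ioc lo hi) with hμ
  haveI : IsFiniteMeasure μ := ⟨by
    rw [hμ, MeasureTheory.Measure.restrict_apply_univ]; exact measure_Ioc_lt_top⟩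
  have hlosub : ∀ j, lo ≤ mf α β j := fun j => (mf_mono hα hβ).monotone (Fin.zero_le j)
  have hhisub : ∀ j, Mf α β j ≤ hi := fun j => (Mf_mono hα hβ).monotone (Fin.le_last j)
  set K : ℝ := max |lo| |hi| with hK
  have habsK : ∀ s ∈ Set.Ioc lo hi, |s| ≤ K := by
    intro s hs
    rw [abs_le]
    constructor
    · linarith [neg_abs_le lo, hs.1, le_max_left |lo| |hi|]
    · exact hs.2.trans ((le_abs_self hi).trans (le_max_right _ _))
  have hTmeas : ∀ j : Fin (d'+1), Measurable (Tf α β j) := by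
    intro j
    apply Measurable.sub
    · exact Measurable.ite measurableSet_Iic measurable_const measurable_const
    · exact Measurable.ite measurableSet_Iic measurable_const measurable_const
  have hterm : ∀ (p : ℝ) (j : Fin (d'+1)),
      p * ∫ s, Real.exp (s * p) * Tf α β j s ∂μ
        = Real.exp (α j * p) - Real.exp (β j * p) := by
    intro p j
    have he : (fun s => Real.exp (s * p) * Tf α β j s)
        = (Set.Ioc (mf α β j) (Mf α β j)).indicator
            (fun s => Real.exp (s * p) * epsf α β j) := by
      funext s
      by_cases hc : s ∈ Set.Ioc (mf α β j) (Mf α β j)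
      · rw [Set.indicator_of_mem hc, Tf_of_mem hc.1 hc.2]
      · rw [Set.indicator_of_notMem hc,
          Tf_of_not_mem (by simpa [Set.mem_Ioc] using hc), mul_zero]
    rw [he, MeasureTheory.integral_indicator measurableSet_Ioc, hμ,
      MeasureTheory.Measure.restrict_restrict measurableSet_Ioc,
      Set.inter_eq_left.mpr (Set.Ioc_subset_Ioc (hlosub j) (hhisub j)),
      MeasureTheory.integral_mul_const]
    have hkey := exp_integral (mf α β j) (Mf α β j) p (le_of_lt (mf_lt_Mf hdisj j))
    by_cases hP : β j < α j
    · have h1 : mf α β j = β j := min_eq_right hP.le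
      have h2 : Mf α β j = α j := max_eq_left hP.le
      have h3 : epsf α β j = 1 := if_pos hP
      rw [h1, h2] at hkey
      rw [h3, mul_one, h1, h2]
      exact hkey
    · have h1 : mf α β j = α j := min_eq_left (not_lt.mp hP)
      have h2 : Mf α β j = β j := max_eq_right (not_lt.mp hP)
      have h3 : epsf α β j = -1 := if_neg hP
      rw [h1, h2] at hkey
      rw [h3, h1, h2]
      have heq : p * ((∫ s in Set.Ioc (α j) (β j), Real.exp (s * p)) * (-1))
          = -(p * ∫ s in Set.Ioc (α j) (β j), Real.exp (s * p)) := by ring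
      rw [heq, hkey]
      ring
  have hTint : ∀ (p : ℝ) (j : Fin (d'+1)),
      MeasureTheory.Integrable (fun s => Real.exp (s * p) * Tf α β j s) μ := by
    intro p j
    apply my_integrable_of_bound
      ((Real.measurable_exp.comp (measurable_id.mul_const p)).mul (hTmeas j))
    filter_upwards [MeasureTheory.ae_restrict_mem measurableSet_Ioc] with s hs
    calc |Real.exp (s * p) * Tf α β j s| = Real.exp (s * p) * |Tf α β j s| := by
          rw [abs_mul, abs_of_pos (Real.exp_pos _)]
      _ ≤ Real.exp (K * |p|) * 1 := by
          apply mul_le_mul (my_exp_mul_bound (habsK s hs) (le_refl _)) (Tf_abs_le j s)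
            (abs_nonneg _) (Real.exp_pos _).le
      _ = Real.exp (K * |p|) := mul_one _
  have hident : ∀ p : ℝ, p * ∫ s, Real.exp (s * p) * Hf α β s ∂μ
      = (∑ j, Real.exp (α j * p)) - (∑ j, Real.exp (β j * p)) := by
    intro p
    have hsum : (fun s => Real.exp (s * p) * Hf α β s)
        = fun s => ∑ j, Real.exp (s * p) * Tf α β j s := by
      funext s
      unfold Hf
      rw [Finset.mul_sum]
    rw [hsum, MeasureTheory.integral_finset_sum Finset.univ (fun j _ => hTint p j),
      Finset.mul_sum, Finset.sum_congr rfl (fun j _ => hterm p j),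
      Finset.sum_sub_distrib]
  have hne : ¬ (Hf α β =ᵐ[μ] 0) := by
    intro hae
    have h1 : μ {s | Hf α β s ≠ 0} = 0 := by
      rw [Filter.EventuallyEq] at hae
      rw [MeasureTheory.ae_iff] at hae
      simpa using hae
    have hsub : Set.Ioc (mf α β (Fin.last d')) (Mf α β (Fin.last d'))
        ⊆ {s | Hf α β s ≠ 0} := by
      intro s hs
      have hl := Hf_lower hα hβ hs.1 hs.2
      intro h0
      rw [h0, mul_zero] at hl
      linarith
    have h2 : μ (Set.Ioc (mf α β (Fin.last d')) (Mf α β (Fin.last d'))) = 0 :=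
      MeasureTheory.measure_mono_null hsub h1
    rw [hμ, MeasureTheory.Measure.restrict_apply measurableSet_Ioc,
      Set.inter_eq_left.mpr (Set.Ioc_subset_Ioc (hlosub _) (hhisub _)),
      Real.volume_Ioc] at h2
    have h3 := mf_lt_Mf hdisj (Fin.last d')
    exact absurd h2 (ne_of_gt (ENNReal.ofReal_pos.mpr (sub_pos.mpr h3)))
  have hFzero : ∀ p ∈ Z.erase 0, (∫ s, Real.exp (s * p) * Hf α β s ∂μ) = 0 := by
    intro p hp
    have hpne : p ≠ 0 := Finset.ne_of_mem_erase hp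
    have hz := hZ p (Finset.mem_of_mem_erase hp)
    have hid := hident p
    rw [hz] at hid
    exact (mul_eq_zero.mp hid).resolve_left hpne
  have hb := laplace_zero_bound lo hi d' (Hf α β) (d' + 1 : ℝ) (Hf_meas) (Hf_bound)
    (Hf_supp hα hβ) hne (epsf α β (Fin.last d')) (epsf_cases α β _) (tf α β)
    (Hf_sign hα hβ hdisj) (Z.erase 0) hFzero
  have hins : Z ⊆ insert (0:ℝ) (Z.erase 0) := Finset.subset_insert_iff.mpr (le_refl _)
  calc Z.card ≤ (insert (0:ℝ) (Z.erase 0)).card := Finset.card_le_card hins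
    _ ≤ (Z.erase 0).card + 1 := Finset.card_insert_le _ _
    _ ≤ d' + 1 := by omega


lemma exists_sorted (d : ℕ) (f : Fin d → ℝ) (hf : Function.Injective f) :
    ∃ g : Fin d → ℝ, StrictMono g ∧ (∀ j, ∃ i, f i = g j) ∧
      ∀ φ : ℝ → ℝ, ∑ i, φ (f i) = ∑ j, φ (g j) := by
  set A := Finset.image f Finset.univ with hA
  have hcard : A.card = d := by
    rw [hA, Finset.card_image_of_injective _ hf, Finset.card_univ, Fintype.card_fin]
  set e := A.orderIsoOfFin hcard with he
  refine ⟨fun j => (e j : ℝ), ?_, ?_, ?_⟩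
  · intro i j hij
    exact_mod_cast e.lt_iff_lt.mpr hij
  · intro j
    have hmem : (e j : ℝ) ∈ Finset.image f Finset.univ := (e j).2
    obtain ⟨i, _, hi⟩ := Finset.mem_image.mp hmem
    exact ⟨i, hi⟩
  · intro φ
    have h1 : ∑ x ∈ A, φ x = ∑ i, φ (f i) := by
      rw [hA]
      exact Finset.sum_image (by intro x _ y _ h; exact hf h)
    rw [← h1, ← Finset.sum_coe_sort A φ]
    exact (Equiv.sum_comp e.toEquiv (fun x : {x // x ∈ A} => φ (x : ℝ))).symm

/-- The zero set of `p ↦ Σ_i w_i u_i^p − Σ_i w_i v_i^p` is finite, with at most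
`2d − 1` elements in general and at most `d` elements for uniform weights,
provided the `2d` numbers `u_1, …, u_d, v_1, …, v_d` are pairwise distinct and
positive and all weights are strictly positive. -/
theorem zero_set_of_power_mean_difference (d : ℕ) (hd : 1 ≤ d)
    (u v : Fin d → ℝ) (hu : ∀ i, 0 < u i) (hv : ∀ i, 0 < v i)
    (huinj : Function.Injective u) (hvinj : Function.Injective v)
    (hcross : ∀ i j, u i ≠ v j)
    (w : Fin d → ℝ) (hw : inSimplex w) (hwpos : ∀ i, 0 < w i) :
    {p : ℝ | ∑ i, w i * u i ^ p - ∑ i, w i * v i ^ p = 0}.Finite ∧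
    {p : ℝ | ∑ i, w i * u i ^ p - ∑ i, w i * v i ^ p = 0}.ncard ≤ 2 * d - 1 ∧
    ((∀ i, w i = 1 / d) →
      {p : ℝ | ∑ i, w i * u i ^ p - ∑ i, w i * v i ^ p = 0}.ncard ≤ d) := by
  have hgen := general_bound d hd u v hu hv huinj hvinj hcross w hwpos
  obtain ⟨hfin, hcard⟩ := finite_ncard_of_forall_finset hgen
  refine ⟨hfin, hcard, ?_⟩
  intro hwu
  obtain ⟨d', rfl⟩ : ∃ d', d = d' + 1 := ⟨d - 1, by omega⟩
  have hloguinj : Function.Injective (fun i => Real.log (u i)) := fun i j h =>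
    huinj (log_inj_pos (hu i) (hu j) h)
  have hlogvinj : Function.Injective (fun i => Real.log (v i)) := fun i j h =>
    hvinj (log_inj_pos (hv i) (hv j) h)
  obtain ⟨gu, hgumono, hguex, hgusum⟩ := exists_sorted _ _ hloguinj
  obtain ⟨gv, hgvmono, hgvex, hgvsum⟩ := exists_sorted _ _ hlogvinj
  have hdisj : ∀ j k, gu j ≠ gv k := by
    intro j k h
    obtain ⟨i1, hi1⟩ := hguex j
    obtain ⟨i2, hi2⟩ := hgvex k
    exact hcross i1 i2 (log_inj_pos (hu i1) (hv i2) (by rw [hi1, hi2, h]))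
  apply (finite_ncard_of_forall_finset ?_).2
  intro Z hZ
  apply uniform_core d' gu gv hgumono hgvmono hdisj Z
  intro p hp
  have hmem := hZ hp
  simp only [Set.mem_setOf_eq] at hmem
  have hden : ((d' : ℝ) + 1) ≠ 0 := by positivity
  have h1 : ∑ i, w i * u i ^ p = (1 / ((d' : ℝ) + 1)) * ∑ j, Real.exp (gu j * p) := by
    rw [← hgusum (fun x => Real.exp (x * p)), Finset.mul_sum]
    apply Finset.sum_congr rfl
    intro i _
    rw [hwu i, Real.rpow_def_of_pos (hu i)]
    push_cast
    ring
  have h2 : ∑ i, w i * v i ^ p = (1 / ((d' : ℝ) + 1)) * ∑ j, Real.exp (gv j * p) := by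
    rw [← hgvsum (fun x => Real.exp (x * p)), Finset.mul_sum]
    apply Finset.sum_congr rfl
    intro i _
    rw [hwu i, Real.rpow_def_of_pos (hv i)]
    push_cast
    ring
  rw [h1, h2, ← mul_sub] at hmem
  rcases mul_eq_zero.mp hmem with hc | hc
  · exact absurd hc (by positivity)
  · exact hc
end

section
/- Let d ≥ 1, n ≥ d, and let u_1, …, u_n, v_1, …, v_n ∈ ℝ^d have strictly positive entries. For p ≠ 0 define h_i(p) = sign(p) · (u_i^p − v_i^p) ∈ ℝ^d (powers taken componentwise), where sign(p) = +1 if p > 0 and −1 if p < 0. Fix a labeling ℓ ∈ {−1, +1}^n and nonzero reals p_1 ≤ p_2 of the same sign. Say ℓ is realizable at p if there exists w ∈ ℝ^d with ‖w‖ = 1 such that ℓ_i ⟨w, h_i(p)⟩ ≥ 0 for all i = 1, …, n. If ℓ is realizable at p_2 but not realizable at p_1, then there exist p ∈ [p_1, p_2] and a subset S ⊆ {1, …, n} with |S| = d such that the vectors {h_i(p) : i ∈ S} are linearly dependent in ℝ^d. -/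
lemma exists_dual_vec {d : ℕ} {ι : Type*} [Fintype ι] (b : ι → (Fin d → ℝ))
    (hb : LinearIndependent ℝ b) (c : ι → ℝ) :
    ∃ z : Fin d → ℝ, ∀ i, ∑ j, z j * b i j = c i := by
  classical
  set B := Module.Basis.span hb
  obtain ⟨f, hf⟩ := LinearMap.exists_extend (B.constr ℝ c)
  refine ⟨fun j => f (fun k => if j = k then 1 else 0), fun i => ?_⟩
  have hmem : b i ∈ Submodule.span ℝ (Set.range b) :=
    Submodule.subset_span (Set.mem_range_self i)
  have h1 : f (b i) = c i := by
    have : f ((Submodule.span ℝ (Set.range b)).subtype ⟨b i, hmem⟩) = (B.constr ℝ c) ⟨b i, hmem⟩ := by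
      rw [← LinearMap.comp_apply, hf]
    have hBi : (⟨b i, hmem⟩ : Submodule.span ℝ (Set.range b)) = B i := by
      ext; simp [B, Module.Basis.span_apply]
    rw [hBi, Module.Basis.constr_basis] at this
    rwa [show ((Submodule.span ℝ (Set.range b)).subtype (B i)) = b i from congrArg Subtype.val (Module.Basis.span_apply hb i)] at this
  calc ∑ j, (fun j => f (fun k => if j = k then 1 else 0)) j * b i j
      = f (∑ j, b i j • fun k => if j = k then (1:ℝ) else 0) := by
        rw [map_sum]; simp [mul_comm, Finset.sum_congr]
    _ = c i := by rw [← pi_eq_sum_univ (b i), h1]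

lemma not_li_of_orth {d : ℕ} (w : Fin d → ℝ) (hw : w ≠ 0)
    {ι : Type*} [Fintype ι] (hcard : Fintype.card ι = d) (b : ι → (Fin d → ℝ))
    (horth : ∀ i, ∑ j, w j * b i j = 0) : ¬ LinearIndependent ℝ b := by
  intro li
  classical
  set f : (Fin d → ℝ) →ₗ[ℝ] ℝ :=
    { toFun := fun x => ∑ j, w j * x j
      map_add' := by intro x y; simp [mul_add, Finset.sum_add_distrib]
      map_smul' := by intro r x; simp [Finset.mul_sum, mul_comm, mul_left_comm] }
  have hfw : f w ≠ 0 := by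
    have : 0 < ∑ j, w j * w j := by
      obtain ⟨j, hj⟩ := Function.ne_iff.mp hw
      exact Finset.sum_pos' (fun k _ => mul_self_nonneg _)
        ⟨j, Finset.mem_univ j, mul_self_pos.mpr hj⟩
    simpa [f] using this.ne'
  have hspan : Submodule.span ℝ (Set.range b) ≤ LinearMap.ker f := by
    rw [Submodule.span_le]
    rintro x ⟨i, rfl⟩
    simpa [f] using horth i
  have h1 : d ≤ Module.finrank ℝ (LinearMap.ker f) := by
    calc d = Fintype.card ι := hcard.symm
    _ = Module.finrank ℝ (Submodule.span ℝ (Set.range b)) := (finrank_span_eq_card li).symm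
    _ ≤ Module.finrank ℝ (LinearMap.ker f) := Submodule.finrank_mono hspan
  have h2 := LinearMap.finrank_range_add_finrank_ker f
  have h3 : Module.finrank ℝ (Fin d → ℝ) = d := by simp
  have h4 : 0 < Module.finrank ℝ (LinearMap.range f) := by
    have hmem : f w ∈ LinearMap.range f := LinearMap.mem_range_self f w
    have hne : LinearMap.range f ≠ ⊥ := by
      intro h; rw [h] at hmem; simp at hmem; exact hfw hmem
    have : Nontrivial (LinearMap.range f) := Submodule.nontrivial_iff_ne_bot.mpr hne
    exact Module.finrank_pos
  omega

lemma cont_rpow_exp {x : ℝ} (hx : 0 < x) : Continuous (fun p : ℝ => x ^ p) := by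
  have : (fun p : ℝ => x ^ p) = fun p => Real.exp (Real.log x * p) :=
    funext fun p => Real.rpow_def_of_pos hx p
  rw [this]
  exact Real.continuous_exp.comp (continuous_const.mul continuous_id)



/-- The vector `h_i(p) = sign(p) · (u_i^p − v_i^p)` with powers taken
componentwise, for `p ≠ 0`. -/
noncomputable def hvec {d n : ℕ} (u v : Fin n → Fin d → ℝ) (p : ℝ) (i : Fin n) :
    Fin d → ℝ :=
  fun j => (if 0 < p then (1 : ℝ) else -1) * (u i j ^ p - v i j ^ p)

/-- A labeling `ℓ` is realizable at `p` if some unit vector `w` satisfies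
`ℓ_i ⟨w, h_i(p)⟩ ≥ 0` for all `i`. -/
noncomputable def realizable {d n : ℕ} (u v : Fin n → Fin d → ℝ)
    (ℓ : Fin n → ℝ) (p : ℝ) : Prop :=
  ∃ w : Fin d → ℝ, Real.sqrt (∑ j, w j ^ 2) = 1 ∧
    ∀ i, 0 ≤ ℓ i * ∑ j, w j * hvec u v p i j

/-- If a labeling is realizable at `p₂` but not at `p₁` (both nonzero of the same
sign), then at some `p ∈ [p₁, p₂]` there are `d` of the vectors `h_i(p)` that are
linearly dependent. -/
theorem linear_dependence_at_transition (d n : ℕ) (hd : 1 ≤ d) (hn : d ≤ n)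
    (u v : Fin n → Fin d → ℝ)
    (hu : ∀ i j, 0 < u i j) (hv : ∀ i j, 0 < v i j)
    (ℓ : Fin n → ℝ) (hℓ : ∀ i, ℓ i = 1 ∨ ℓ i = -1)
    (p₁ p₂ : ℝ) (hp₁ : p₁ ≠ 0) (hp₂ : p₂ ≠ 0) (hle : p₁ ≤ p₂)
    (hsign : (0 < p₁ ∧ 0 < p₂) ∨ (p₁ < 0 ∧ p₂ < 0))
    (hreal : realizable u v ℓ p₂) (hnreal : ¬ realizable u v ℓ p₁) :
    ∃ p ∈ Set.Icc p₁ p₂, ∃ S : Finset (Fin n), S.card = d ∧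
      ¬ LinearIndependent ℝ (fun i : S => hvec u v p i) := by
  classical
  set s : ℝ := if 0 < p₁ then (1 : ℝ) else -1 with hs_def
  -- on the interval, the sign factor is constant
  have hveq : ∀ p ∈ Set.Icc p₁ p₂, ∀ i j,
      hvec u v p i j = s * (u i j ^ p - v i j ^ p) := by
    intro p hp i j
    rcases hsign with ⟨h1, _⟩ | ⟨_, h2⟩
    · have : 0 < p := lt_of_lt_of_le h1 hp.1
      simp [hvec, s, this, h1]
    · have hp0 : ¬ 0 < p := not_lt.mpr (hp.2.trans h2.le)
      have hp10 : ¬ 0 < p₁ := not_lt.mpr (hle.trans h2.le)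
      simp [hvec, s, hp0, hp10]
  have hℓne : ∀ i, ℓ i ≠ 0 := by
    intro i; rcases hℓ i with h | h <;> rw [h] <;> norm_num
  have hℓsq : ∀ i, ℓ i * ℓ i = 1 := by
    intro i; rcases hℓ i with h | h <;> rw [h] <;> norm_num
  -- the "constant sign" constraint functions, continuous everywhere
  set G : Fin n → ℝ × (Fin d → ℝ) → ℝ :=
    fun i q => ℓ i * ∑ j, q.2 j * (s * (u i j ^ q.1 - v i j ^ q.1)) with hG_def
  have hGcont : ∀ i, Continuous (G i) := by
    intro i
    apply continuous_const.mul
    apply continuous_finset_sum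
    intro j _
    exact ((continuous_apply j).comp continuous_snd).mul
      (continuous_const.mul
        (((cont_rpow_exp (hu i j)).comp continuous_fst).sub
          ((cont_rpow_exp (hv i j)).comp continuous_fst)))
  -- the unit sphere
  set K : Set (Fin d → ℝ) := {w | Real.sqrt (∑ j, w j ^ 2) = 1} with hK_def
  have hKsum : ∀ w ∈ K, (∑ j, w j ^ 2) = 1 := by
    intro w hw
    have h0 : 0 ≤ ∑ j, w j ^ 2 := Finset.sum_nonneg fun j _ => sq_nonneg _
    have := hw
    rw [hK_def, Set.mem_setOf_eq] at this
    nlinarith [Real.sq_sqrt h0, this]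
  have hKcompact : IsCompact K := by
    have hKclosed : IsClosed K := by
      have : Continuous fun w : Fin d → ℝ => Real.sqrt (∑ j, w j ^ 2) :=
        Real.continuous_sqrt.comp (continuous_finset_sum _ fun j _ => (continuous_apply j).pow 2)
      exact isClosed_eq this continuous_const
    have hKsub : K ⊆ Metric.closedBall 0 1 := by
      intro w hw
      rw [Metric.mem_closedBall, dist_zero_right]
      rw [pi_norm_le_iff_of_nonneg zero_le_one]
      intro j
      rw [Real.norm_eq_abs, abs_le_one_iff_mul_self_le_one, ← sq]
      calc w j ^ 2 ≤ ∑ k, w k ^ 2 :=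
            Finset.single_le_sum (fun k _ => sq_nonneg (w k)) (Finset.mem_univ j)
        _ = 1 := hKsum w hw
    exact (isCompact_closedBall 0 1).of_isClosed_subset hKclosed hKsub
  -- the compact feasibility set
  set B : Set (ℝ × (Fin d → ℝ)) :=
    (Set.Icc p₁ p₂ ×ˢ K) ∩ ⋂ i, {q | 0 ≤ G i q} with hB_def
  have hBcompact : IsCompact B :=
    (isCompact_Icc.prod hKcompact).inter_right
      (isClosed_iInter fun i => isClosed_le continuous_const (hGcont i))
  set A : Set ℝ := Prod.fst '' B with hA_def
  have hAcompact : IsCompact A := hBcompact.image continuous_fst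
  have hAsub : A ⊆ Set.Icc p₁ p₂ := by
    rintro p ⟨q, hq, rfl⟩
    exact hq.1.1
  have hmemA : ∀ p ∈ Set.Icc p₁ p₂, (realizable u v ℓ p ↔ p ∈ A) := by
    intro p hp
    constructor
    · rintro ⟨w, hw1, hw2⟩
      refine ⟨(p, w), ⟨⟨hp, hw1⟩, ?_⟩, rfl⟩
      rw [Set.mem_iInter]
      intro i
      have := hw2 i
      simp only [Set.mem_setOf_eq, hG_def]
      have heq : ∀ j, w j * hvec u v p i j = w j * (s * (u i j ^ p - v i j ^ p)) := by
        intro j; rw [hveq p hp i j]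
      calc (0:ℝ) ≤ ℓ i * ∑ j, w j * hvec u v p i j := hw2 i
        _ = ℓ i * ∑ j, w j * (s * (u i j ^ p - v i j ^ p)) := by
            congr 1; exact Finset.sum_congr rfl fun j _ => heq j
    · rintro ⟨⟨p', w⟩, ⟨⟨hp', hwK⟩, hcon⟩, rfl⟩
      refine ⟨w, hwK, fun i => ?_⟩
      rw [Set.mem_iInter] at hcon
      have := hcon i
      simp only [Set.mem_setOf_eq, hG_def] at this
      calc (0:ℝ) ≤ ℓ i * ∑ j, w j * (s * (u i j ^ p' - v i j ^ p')) := this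
        _ = ℓ i * ∑ j, w j * hvec u v p' i j := by
            congr 1; exact Finset.sum_congr rfl fun j _ => (by rw [hveq p' hp' i j])
  have hp₂A : p₂ ∈ A := (hmemA p₂ ⟨hle, le_refl _⟩).mp hreal
  have hAne : A.Nonempty := ⟨p₂, hp₂A⟩
  set q : ℝ := sInf A with hq_def
  have hqA : q ∈ A := hAcompact.sInf_mem hAne
  have hqIcc : q ∈ Set.Icc p₁ p₂ := hAsub hqA
  have hqreal : realizable u v ℓ q := (hmemA q hqIcc).mpr hqA
  have hq1 : p₁ < q := by
    rcases lt_or_eq_of_le hqIcc.1 with h | h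
    · exact h
    · exact absurd (h ▸ hqreal) hnreal
  -- main case split
  by_cases hdep : ∃ S : Finset (Fin n), S.card = d ∧
      ¬ LinearIndependent ℝ (fun i : S => hvec u v q i)
  · exact ⟨q, hqIcc, hdep⟩
  push_neg at hdep
  exfalso
  obtain ⟨w, hwK, hwcon⟩ := hqreal
  have hw0 : w ≠ 0 := by
    intro h
    rw [h] at hwK
    simp at hwK
  set I : Finset (Fin n) := Finset.univ.filter
    (fun i => ∑ j, w j * hvec u v q i j = 0) with hI_def
  have hIcard : I.card < d := by
    by_contra hc
    push_neg at hc
    obtain ⟨S, hSsub, hScard⟩ := Finset.exists_subset_card_eq hc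
    refine not_li_of_orth w hw0 (by rw [Fintype.card_coe]; exact hScard)
      (fun i : S => hvec u v q i) (fun i => ?_) (hdep S hScard)
    have : (i : Fin n) ∈ I := hSsub i.2
    rw [hI_def, Finset.mem_filter] at this
    exact this.2
  obtain ⟨S, hIS, _, hScard⟩ := Finset.exists_subsuperset_card_eq
    (Finset.subset_univ I) hIcard.le (by rw [Finset.card_univ, Fintype.card_fin]; exact hn)
  have hli : LinearIndependent ℝ (fun i : S => hvec u v q i) := hdep S hScard
  have hliI : LinearIndependent ℝ (fun i : I => hvec u v q i) := by
    have := hli.comp (fun i : I => (⟨i.1, hIS i.2⟩ : S))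
      (by intro a b hab; apply Subtype.ext; simpa using congrArg Subtype.val hab)
    exact this
  obtain ⟨z, hz⟩ := exists_dual_vec (fun i : I => hvec u v q i) hliI (fun i => ℓ i)
  -- constraint values with w and correction values with z
  set a : Fin n → ℝ := fun i => ℓ i * ∑ j, w j * hvec u v q i j with ha_def
  set b : Fin n → ℝ := fun i => ℓ i * ∑ j, z j * hvec u v q i j with hb_def
  have haI : ∀ i ∈ I, a i = 0 := by
    intro i hi
    rw [hI_def, Finset.mem_filter] at hi
    rw [ha_def]; simp only; rw [hi.2, mul_zero]
  have hbI : ∀ i ∈ I, b i = 1 := by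
    intro i hi
    rw [hb_def]; simp only
    rw [hz ⟨i, hi⟩]
    exact hℓsq i
  have haO : ∀ i ∉ I, 0 < a i := by
    intro i hi
    have hne : ∑ j, w j * hvec u v q i j ≠ 0 := by
      intro h; exact hi (by rw [hI_def, Finset.mem_filter]; exact ⟨Finset.mem_univ i, h⟩)
    exact lt_of_le_of_ne (hwcon i) (Ne.symm (mul_ne_zero (hℓne i) hne))
  -- choose ε > 0 making all constraints strictly positive
  obtain ⟨ε, hε0, hεpos⟩ : ∃ ε > 0, ∀ i, 0 < a i + ε * b i := by
    by_cases hT : (Finset.univ.filter (fun i => i ∉ I)).Nonempty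
    · set T := Finset.univ.filter (fun i => i ∉ I) with hT_def
      set ε := min 1 (T.inf' hT fun i => a i / (|b i| + 1)) with hε_def
      have hεle : ∀ i ∈ T, ε ≤ a i / (|b i| + 1) := fun i hi =>
        (min_le_right _ _).trans (Finset.inf'_le _ hi)
      have hε0 : 0 < ε := by
        rw [hε_def]
        apply lt_min one_pos
        rw [Finset.lt_inf'_iff]
        intro i hi
        have hai : 0 < a i := haO i (by rw [hT_def, Finset.mem_filter] at hi; exact hi.2)
        positivity
      refine ⟨ε, hε0, fun i => ?_⟩
      by_cases hi : i ∈ I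
      · rw [haI i hi, hbI i hi]; simpa using hε0
      · have hiT : i ∈ T := by rw [hT_def, Finset.mem_filter]; exact ⟨Finset.mem_univ i, hi⟩
        have h1 : ε * (|b i| + 1) ≤ a i := by
          rw [← le_div_iff₀ (by positivity)]
          exact hεle i hiT
        nlinarith [neg_abs_le (b i), abs_nonneg (b i)]
    · refine ⟨1, one_pos, fun i => ?_⟩
      have hi : i ∈ I := by
        by_contra h
        exact hT ⟨i, by rw [Finset.mem_filter]; exact ⟨Finset.mem_univ i, h⟩⟩
      rw [haI i hi, hbI i hi]; norm_num
  set w' : Fin d → ℝ := fun j => w j + ε * z j with hw'_def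
  have hw'val : ∀ i, ℓ i * ∑ j, w' j * hvec u v q i j = a i + ε * b i := by
    intro i
    rw [ha_def, hb_def, hw'_def]
    simp only
    rw [show ∑ j, (w j + ε * z j) * hvec u v q i j
        = (∑ j, w j * hvec u v q i j) + ε * ∑ j, z j * hvec u v q i j by
      rw [Finset.mul_sum, ← Finset.sum_add_distrib]; exact Finset.sum_congr rfl fun j _ => by ring]
    ring
  -- the strict-positivity functions of p alone
  set g : Fin n → ℝ → ℝ := fun i p => ℓ i * ∑ j, w' j * (s * (u i j ^ p - v i j ^ p)) with hg_def
  have hgcont : ∀ i, Continuous (g i) := by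
    intro i
    exact (hGcont i).comp (continuous_id.prodMk continuous_const)
  have hgq : ∀ i, 0 < g i q := by
    intro i
    have : g i q = ℓ i * ∑ j, w' j * hvec u v q i j := by
      rw [hg_def]; simp only; congr 1
      exact Finset.sum_congr rfl fun j _ => by rw [hveq q hqIcc i j]
    rw [this, hw'val i]
    exact hεpos i
  -- find a neighborhood of q where all g i are positive
  have hopen : IsOpen (⋂ i, (g i) ⁻¹' Set.Ioi 0) :=
    isOpen_iInter_of_finite fun i => (hgcont i).isOpen_preimage _ isOpen_Ioi
  have hqmem : q ∈ ⋂ i, (g i) ⁻¹' Set.Ioi 0 := by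
    rw [Set.mem_iInter]; exact fun i => hgq i
  obtain ⟨δ, hδ0, hδball⟩ := Metric.isOpen_iff.mp hopen q hqmem
  set p : ℝ := max p₁ (q - δ / 2) with hp_def
  have hpq : p < q := by
    rw [hp_def]
    apply max_lt hq1
    linarith
  have hpIcc : p ∈ Set.Icc p₁ p₂ := ⟨le_max_left _ _, hpq.le.trans hqIcc.2⟩
  have hpball : p ∈ Metric.ball q δ := by
    rw [Metric.mem_ball, Real.dist_eq, abs_sub_lt_iff]
    constructor
    · linarith [hpq]
    · have : q - δ / 2 ≤ p := le_max_right _ _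
      linarith
  have hgp : ∀ i, 0 < g i p := by
    have := hδball hpball
    rw [Set.mem_iInter] at this
    exact fun i => this i
  -- normalize w'
  have hi₀ : ∃ i₀ : Fin n, True := ⟨⟨0, lt_of_lt_of_le hd hn⟩, trivial⟩
  obtain ⟨i₀, -⟩ := hi₀
  have hw'0 : (∑ j, w' j ^ 2) ≠ 0 := by
    intro h
    have hall : ∀ j, w' j = 0 := by
      intro j
      have := (Finset.sum_eq_zero_iff_of_nonneg (fun k _ => sq_nonneg (w' k))).mp h j
        (Finset.mem_univ j)
      exact pow_eq_zero_iff (n := 2) (by norm_num) |>.mp this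
    have : g i₀ p = 0 := by
      rw [hg_def]; simp [hall]
    linarith [hgp i₀]
  have hw'sum : 0 < ∑ j, w' j ^ 2 :=
    lt_of_le_of_ne (Finset.sum_nonneg fun j _ => sq_nonneg _) (Ne.symm hw'0)
  set N : ℝ := Real.sqrt (∑ j, w' j ^ 2) with hN_def
  have hN0 : 0 < N := Real.sqrt_pos.mpr hw'sum
  have hrealp : realizable u v ℓ p := by
    refine ⟨fun j => w' j / N, ?_, ?_⟩
    · rw [show (∑ j, (w' j / N) ^ 2) = (∑ j, w' j ^ 2) / N ^ 2 by
        rw [Finset.sum_div]; exact Finset.sum_congr rfl fun j _ => by ring]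
      rw [hN_def, Real.sq_sqrt hw'sum.le, div_self hw'0]
      exact Real.sqrt_one
    · intro i
      have heq : ℓ i * ∑ j, (w' j / N) * hvec u v p i j = (1 / N) * g i p := by
        have h1 : ∑ j, (w' j / N) * hvec u v p i j
            = (1 / N) * ∑ j, w' j * (s * (u i j ^ p - v i j ^ p)) := by
          rw [Finset.mul_sum]
          refine Finset.sum_congr rfl fun j _ => ?_
          rw [hveq p hpIcc i j]; ring
        rw [h1, hg_def]; ring
      rw [heq]
      exact mul_nonneg (by positivity) (hgp i).le
  have hpA : p ∈ A := (hmemA p hpIcc).mp hrealp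
  have : q ≤ p := csInf_le hAcompact.bddBelow hpA
  linarith
end
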